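/- arXiv:2509.02310 — 5 statements merged into one kernel-verified Lean document; each statement's English description precedes it below -/
import Mathlib

section
/- Let n ∈ ℕ and p ∈ [0,1]. Let S be a Binomial(n,p) random variable and T a Poisson(np) random variable. Then the total variation distance between the laws of S and T is at most 9p, i.e. sup_{A ⊆ ℕ} | P(S ∈ A) − P(T ∈ A) | ≤ 9p. -/
/-- The Binomial(n,p) probability mass function. -/
noncomputable def binomPMFReal (n : ℕ) (p : ℝ) (k : ℕ) : ℝ :=
  (n.choose k : ℝ) * p ^ k * (1 - p) ^ (n - k)

/-- The Poisson(μ) probability mass function. -/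
noncomputable def poissonPMFRealFn (μ : ℝ) (k : ℕ) : ℝ :=
  Real.exp (-μ) * μ ^ k / (Nat.factorial k : ℝ)

/-!
Stein–Chen method. For `μ > 0` and any `f`, `poissonSteinSolution μ f` solves the Stein equation
`μ g (k + 1) - k g k = f k`. Taking `f = 1_A - P(T ∈ A)` turns `P(S ∈ A) - P(T ∈ A)` into
`E[μ g (S + 1) - S g S]`. Splitting `S ~ Bin(N + 1, p)` as `S' + ξ` with `S' ~ Bin(N, p)` and
`ξ ~ Ber(p)`, this expectation equals `μ p E[g (S' + 2) - g (S' + 1)]`, and the log-concavity of the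
Poisson weights bounds the increments of `g` by `1 / μ`; hence the distance is at most `p`.
-/

open Finset

noncomputable def poissonCDF (μ : ℝ) (j : ℕ) : ℝ :=
  ∑ i ∈ range (j + 1), poissonPMFRealFn μ i

noncomputable def poissonSteinSolution (μ : ℝ) (f : ℕ → ℝ) : ℕ → ℝ
  | 0 => 0
  | j + 1 => (∑ i ∈ range (j + 1), f i * poissonPMFRealFn μ i) / (μ * poissonPMFRealFn μ j)

section Poisson

variable {μ : ℝ}

lemma poissonPMFRealFn_nonneg (hμ : 0 ≤ μ) (k : ℕ) : 0 ≤ poissonPMFRealFn μ k := by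
  unfold poissonPMFRealFn; positivity

lemma poissonPMFRealFn_pos (hμ : 0 < μ) (k : ℕ) : 0 < poissonPMFRealFn μ k := by
  unfold poissonPMFRealFn; positivity

lemma poissonPMFRealFn_succ (μ : ℝ) (k : ℕ) :
    poissonPMFRealFn μ (k + 1) = μ / (k + 1) * poissonPMFRealFn μ k := by
  simp only [poissonPMFRealFn, Nat.factorial_succ, pow_succ, Nat.cast_mul, Nat.cast_succ]
  field_simp

lemma mul_poissonPMFRealFn (μ : ℝ) (k : ℕ) :
    μ * poissonPMFRealFn μ k = (k + 1) * poissonPMFRealFn μ (k + 1) := by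
  rw [poissonPMFRealFn_succ]
  field_simp

lemma hasSum_poissonPMFRealFn (hμ : 0 ≤ μ) : HasSum (poissonPMFRealFn μ) 1 := by
  have h := ProbabilityTheory.hasSum_one_poissonMeasure μ.toNNReal
  rwa [Real.coe_toNNReal μ hμ] at h

lemma summable_poissonPMFRealFn (hμ : 0 ≤ μ) : Summable (poissonPMFRealFn μ) :=
  (hasSum_poissonPMFRealFn hμ).summable

lemma poissonPMFRealFn_succ_mul_le (hμ : 0 ≤ μ) {i m : ℕ} (h : i ≤ m) :
    poissonPMFRealFn μ (m + 1) * poissonPMFRealFn μ i ≤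
      poissonPMFRealFn μ (i + 1) * poissonPMFRealFn μ m := by
  have hi := poissonPMFRealFn_nonneg hμ i
  have hm := poissonPMFRealFn_nonneg hμ m
  rw [poissonPMFRealFn_succ, poissonPMFRealFn_succ, mul_right_comm]
  gcongr

lemma poissonCDF_succ (μ : ℝ) (m : ℕ) :
    poissonCDF μ (m + 1) = poissonCDF μ m + poissonPMFRealFn μ (m + 1) :=
  sum_range_succ _ _

lemma poissonCDF_mul_le (hμ : 0 ≤ μ) (m : ℕ) :
    poissonCDF μ m * poissonPMFRealFn μ (m + 1) ≤
      poissonCDF μ (m + 1) * poissonPMFRealFn μ m := by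
  calc poissonCDF μ m * poissonPMFRealFn μ (m + 1)
      = ∑ i ∈ range (m + 1), poissonPMFRealFn μ (m + 1) * poissonPMFRealFn μ i := by
        rw [poissonCDF, sum_mul]; simp only [mul_comm]
    _ ≤ ∑ i ∈ range (m + 1), poissonPMFRealFn μ (i + 1) * poissonPMFRealFn μ m :=
        sum_le_sum fun i hi ↦
          poissonPMFRealFn_succ_mul_le hμ (Nat.lt_succ_iff.mp (mem_range.mp hi))
    _ ≤ poissonCDF μ (m + 1) * poissonPMFRealFn μ m := by
        rw [poissonCDF, sum_range_succ' (poissonPMFRealFn μ), add_mul, sum_mul]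
        exact le_add_of_nonneg_right
          (mul_nonneg (poissonPMFRealFn_nonneg hμ 0) (poissonPMFRealFn_nonneg hμ m))

lemma one_sub_poissonCDF (hμ : 0 ≤ μ) (m : ℕ) :
    1 - poissonCDF μ m = ∑' i, poissonPMFRealFn μ (i + (m + 1)) := by
  rw [← (hasSum_poissonPMFRealFn hμ).tsum_eq,
    ← (summable_poissonPMFRealFn hμ).sum_add_tsum_nat_add (m + 1), poissonCDF, add_sub_cancel_left]

lemma one_sub_poissonCDF_succ_mul_le (hμ : 0 ≤ μ) (m : ℕ) :
    (1 - poissonCDF μ (m + 1)) * poissonPMFRealFn μ m ≤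
      (1 - poissonCDF μ m) * poissonPMFRealFn μ (m + 1) := by
  have htail (k : ℕ) : Summable fun i ↦ poissonPMFRealFn μ (i + k) :=
    (summable_nat_add_iff k).mpr (summable_poissonPMFRealFn hμ)
  rw [one_sub_poissonCDF hμ, one_sub_poissonCDF hμ, ← tsum_mul_right, ← tsum_mul_right]
  refine (htail _).mul_right _ |>.tsum_le_tsum (fun i ↦ ?_) ((htail _).mul_right _)
  rw [mul_comm _ (poissonPMFRealFn μ (m + 1))]
  exact poissonPMFRealFn_succ_mul_le hμ (i := m) (m := i + (m + 1)) (by omega)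

theorem poissonSteinSolution_spec (hμ : 0 < μ) (f : ℕ → ℝ) (k : ℕ) :
    μ * poissonSteinSolution μ f (k + 1) - k * poissonSteinSolution μ f k = f k := by
  have hq := poissonPMFRealFn_pos hμ
  cases k with
  | zero =>
    simp only [poissonSteinSolution, zero_add, sum_range_one, Nat.cast_zero, zero_mul, sub_zero]
    field_simp [(hq 0).ne']
  | succ k =>
    simp only [poissonSteinSolution, sum_range_succ _ (k + 1)]
    rw [mul_poissonPMFRealFn μ k]
    push_cast
    field_simp [(hq k).ne', (hq (k + 1)).ne']
    ring

lemma poissonSteinSolution_neg (f : ℕ → ℝ) :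
    poissonSteinSolution μ (fun k ↦ -f k) = -poissonSteinSolution μ f := by
  funext j
  cases j <;> simp [poissonSteinSolution, sum_neg_distrib, neg_div]

theorem poissonSteinSolution_indicator_sub_le (hμ : 0 < μ) (A : Set ℕ) (m : ℕ) :
    poissonSteinSolution μ (fun k ↦ A.indicator 1 k - ∑' i, A.indicator (poissonPMFRealFn μ) i)
        (m + 1 + 1) -
      poissonSteinSolution μ (fun k ↦ A.indicator 1 k - ∑' i, A.indicator (poissonPMFRealFn μ) i)
        (m + 1) ≤ 1 / μ := by
  have hR := poissonCDF_mul_le hμ.le m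
  have hT := one_sub_poissonCDF_succ_mul_le hμ.le m
  have hq := poissonPMFRealFn_pos hμ m
  have hq' := poissonPMFRealFn_pos hμ (m + 1)
  have hAq : 0 ≤ A.indicator (poissonPMFRealFn μ) :=
    Set.indicator_nonneg fun k _ ↦ (poissonPMFRealFn_pos hμ k).le
  simp only [poissonSteinSolution]
  rw [poissonCDF_succ] at hR hT
  set q := poissonPMFRealFn μ with hq_def
  set P := ∑' i, A.indicator q i
  have hnum (j : ℕ) : ∑ i ∈ range (j + 1), (A.indicator 1 i - P) * q i =
      ∑ i ∈ range (j + 1), A.indicator q i - P * poissonCDF μ j := by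
    rw [poissonCDF, mul_sum, ← sum_sub_distrib]
    refine sum_congr rfl fun i _ ↦ ?_
    by_cases hi : i ∈ A <;> simp [hi, q]; ring
  have hP : ∑ i ∈ range (m + 1 + 1), A.indicator q i ≤ P :=
    ((summable_poissonPMFRealFn hμ.le).indicator A).sum_le_tsum _ fun i _ ↦ hAq i
  rw [hnum, hnum, sum_range_succ (A.indicator q) (m + 1), poissonCDF_succ, ← hq_def]
  rw [sum_range_succ] at hP
  set S := ∑ i ∈ range (m + 1), A.indicator q i
  set y := A.indicator q (m + 1)
  set Q := poissonCDF μ m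
  have hS : 0 ≤ S := sum_nonneg fun i _ ↦ hAq i
  have hy : y = 0 ∨ y = q (m + 1) := by
    by_cases h : m + 1 ∈ A <;> simp [y, h]
  have hD : 0 ≤ (Q + q (m + 1)) * q m - Q * q (m + 1) := sub_nonneg.mpr hR
  -- Bound `P` below by `S + y` (its coefficient is `-D ≤ 0`); the coefficient of `S` is then
  -- nonpositive by `hT`.
  have key : (S + y - P * (Q + q (m + 1))) * q m - (S - P * Q) * q (m + 1) ≤ q m * q (m + 1) := by
    rcases hy with h | h <;> rw [h] at hP ⊢ <;>
      nlinarith [mul_le_mul_of_nonneg_right hP hD, mul_le_mul_of_nonneg_left hT hS,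
        mul_nonneg hq'.le hD, mul_pos hq hq']
  calc _ = ((S + y - P * (Q + q (m + 1))) * q m - (S - P * Q) * q (m + 1)) /
        (q m * q (m + 1)) / μ := by field_simp
    _ ≤ q m * q (m + 1) / (q m * q (m + 1)) / μ := by gcongr
    _ = 1 / μ := by rw [div_self (by positivity)]

lemma tsum_indicator_compl_poissonPMFRealFn (hμ : 0 ≤ μ) (A : Set ℕ) :
    ∑' i, Aᶜ.indicator (poissonPMFRealFn μ) i = 1 - ∑' i, A.indicator (poissonPMFRealFn μ) i := by
  have hs := summable_poissonPMFRealFn hμ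
  rw [eq_sub_iff_add_eq', ← (hs.indicator A).tsum_add (hs.indicator Aᶜ), ← Pi.add_def,
    Set.indicator_self_add_compl, (hasSum_poissonPMFRealFn hμ).tsum_eq]

theorem abs_poissonSteinSolution_indicator_sub_le (hμ : 0 < μ) (A : Set ℕ) (m : ℕ) :
    |poissonSteinSolution μ (fun k ↦ A.indicator 1 k - ∑' i, A.indicator (poissonPMFRealFn μ) i)
        (m + 1 + 1) -
      poissonSteinSolution μ (fun k ↦ A.indicator 1 k - ∑' i, A.indicator (poissonPMFRealFn μ) i)
        (m + 1)| ≤ 1 / μ := by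
  have hcompl := poissonSteinSolution_indicator_sub_le hμ Aᶜ m
  have hf : (fun k ↦ Aᶜ.indicator 1 k - ∑' i, Aᶜ.indicator (poissonPMFRealFn μ) i) =
      fun k ↦ -(A.indicator 1 k - ∑' i, A.indicator (poissonPMFRealFn μ) i) := by
    funext k
    rw [tsum_indicator_compl_poissonPMFRealFn hμ.le, Set.indicator_compl, Pi.sub_apply,
      Pi.one_apply]
    ring
  rw [hf, poissonSteinSolution_neg, Pi.neg_apply, Pi.neg_apply] at hcompl
  rw [abs_le]
  exact ⟨by linarith, poissonSteinSolution_indicator_sub_le hμ A m⟩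

end Poisson

section Binomial

lemma binomPMFReal_eq_zero_of_lt {n k : ℕ} (p : ℝ) (h : n < k) : binomPMFReal n p k = 0 := by
  simp [binomPMFReal, Nat.choose_eq_zero_of_lt h]

lemma binomPMFReal_nonneg {p : ℝ} (hp0 : 0 ≤ p) (hp1 : p ≤ 1) (n k : ℕ) :
    0 ≤ binomPMFReal n p k := by
  have : 0 ≤ 1 - p := sub_nonneg.mpr hp1
  unfold binomPMFReal; positivity

lemma sum_range_binomPMFReal (n : ℕ) (p : ℝ) : ∑ k ∈ range (n + 1), binomPMFReal n p k = 1 := by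
  have h := add_pow p (1 - p) n
  rw [add_sub_cancel, one_pow] at h
  rw [h]
  exact sum_congr rfl fun k _ ↦ by unfold binomPMFReal; ring

lemma binomPMFReal_succ_zero (N : ℕ) (p : ℝ) :
    binomPMFReal (N + 1) p 0 = (1 - p) * binomPMFReal N p 0 := by
  simp [binomPMFReal, pow_succ, mul_comm]

lemma binomPMFReal_succ_succ (N j : ℕ) (p : ℝ) :
    binomPMFReal (N + 1) p (j + 1) =
      (1 - p) * binomPMFReal N p (j + 1) + p * binomPMFReal N p j := by
  unfold binomPMFReal
  rw [Nat.choose_succ_succ, Nat.succ_sub_succ]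
  rcases lt_or_ge j N with h | h
  · rw [show N - j = N - (j + 1) + 1 by omega]
    push_cast
    ring
  · rw [Nat.choose_eq_zero_of_lt (by omega : N < j + 1)]
    push_cast
    ring

lemma succ_mul_binomPMFReal_succ (N j : ℕ) (p : ℝ) :
    (j + 1) * binomPMFReal (N + 1) p (j + 1) = (N + 1) * p * binomPMFReal N p j := by
  have h : ((N + 1).choose (j + 1) : ℝ) * (j + 1) = (N + 1) * N.choose j := by
    exact_mod_cast (Nat.add_one_mul_choose_eq N j).symm
  unfold binomPMFReal
  rw [Nat.succ_sub_succ, pow_succ]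
  linear_combination p ^ j * p * (1 - p) ^ (N - j) * h

lemma sum_binomPMFReal_succ_mul (N : ℕ) (p : ℝ) (g : ℕ → ℝ) :
    ∑ k ∈ range (N + 2), binomPMFReal (N + 1) p k * g k =
      (1 - p) * ∑ j ∈ range (N + 1), binomPMFReal N p j * g j +
        p * ∑ j ∈ range (N + 1), binomPMFReal N p j * g (j + 1) := by
  have htop : ∑ j ∈ range (N + 1), binomPMFReal N p j * g j =
      ∑ j ∈ range (N + 2), binomPMFReal N p j * g j := by
    rw [sum_range_succ _ (N + 1), binomPMFReal_eq_zero_of_lt p (Nat.lt_succ_self N), zero_mul,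
      add_zero]
  rw [htop, sum_range_succ', sum_range_succ' (fun j ↦ binomPMFReal N p j * g j)]
  simp only [binomPMFReal_succ_succ, binomPMFReal_succ_zero, add_mul, sum_add_distrib, mul_add,
    mul_sum, mul_assoc]
  ring

lemma sum_binomPMFReal_succ_mul_natCast (N : ℕ) (p : ℝ) (g : ℕ → ℝ) :
    ∑ k ∈ range (N + 2), binomPMFReal (N + 1) p k * (k * g k) =
      (N + 1) * p * ∑ j ∈ range (N + 1), binomPMFReal N p j * g (j + 1) := by
  rw [sum_range_succ', mul_sum]
  simp only [Nat.cast_zero, zero_mul, mul_zero, add_zero]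
  refine sum_congr rfl fun j _ ↦ ?_
  push_cast
  linear_combination g (j + 1) * succ_mul_binomPMFReal_succ N j p

theorem sum_binomPMFReal_mul_stein (N : ℕ) (p : ℝ) (g : ℕ → ℝ) :
    ∑ k ∈ range (N + 2), binomPMFReal (N + 1) p k * ((N + 1) * p * g (k + 1) - k * g k) =
      (N + 1) * p * p * ∑ j ∈ range (N + 1), binomPMFReal N p j * (g (j + 1 + 1) - g (j + 1)) := by
  simp only [mul_sub, sum_sub_distrib, sum_binomPMFReal_succ_mul_natCast,
    mul_left_comm (binomPMFReal _ _ _) ((N + 1 : ℝ) * p), ← mul_sum,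
    sum_binomPMFReal_succ_mul N p (fun k ↦ g (k + 1))]
  ring

end Binomial

lemma binomPMFReal_eq_poissonPMFRealFn_zero {n : ℕ} {p : ℝ} (h : n = 0 ∨ p = 0) :
    binomPMFReal n p = poissonPMFRealFn 0 := by
  funext k
  rcases h with rfl | rfl <;> cases k <;> simp [binomPMFReal, poissonPMFRealFn]

theorem abs_tsum_indicator_binomPMFReal_sub_poisson_le (N : ℕ) {p : ℝ} (hp0 : 0 < p)
    (hp1 : p ≤ 1) (A : Set ℕ) :
    |(∑' k, A.indicator (binomPMFReal (N + 1) p) k) -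
      ∑' k, A.indicator (poissonPMFRealFn ((N + 1) * p)) k| ≤ p := by
  set μ : ℝ := (N + 1) * p
  have hμ : 0 < μ := by positivity
  set P := ∑' k, A.indicator (poissonPMFRealFn μ) k
  set g := poissonSteinSolution μ (fun k ↦ A.indicator 1 k - P)
  have hb := binomPMFReal_nonneg hp0.le hp1
  have hdiff : (∑' k, A.indicator (binomPMFReal (N + 1) p) k) - P =
      ∑ k ∈ range (N + 2), binomPMFReal (N + 1) p k * (μ * g (k + 1) - k * g k) := by
    rw [tsum_eq_sum (s := range (N + 2)) fun k hk ↦ Set.indicator_apply_eq_zero.mpr fun _ ↦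
      binomPMFReal_eq_zero_of_lt p (by simp at hk; omega)]
    simp only [g, poissonSteinSolution_spec hμ, mul_sub, sum_sub_distrib, ← sum_mul,
      sum_range_binomPMFReal (N + 1), one_mul]
    congr 1
    refine sum_congr rfl fun k _ ↦ ?_
    by_cases hk : k ∈ A <;> simp [hk]
  rw [hdiff, sum_binomPMFReal_mul_stein, abs_mul, abs_of_pos (by positivity)]
  calc μ * p * |∑ j ∈ range (N + 1), binomPMFReal N p j * (g (j + 1 + 1) - g (j + 1))|
      ≤ μ * p * ∑ j ∈ range (N + 1), binomPMFReal N p j * (1 / μ) := by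
        gcongr
        refine (abs_sum_le_sum_abs _ _).trans (sum_le_sum fun j _ ↦ ?_)
        rw [abs_mul, abs_of_nonneg (hb N j)]
        exact mul_le_mul_of_nonneg_left (abs_poissonSteinSolution_indicator_sub_le hμ A j) (hb N j)
    _ = p := by
        rw [← sum_mul, sum_range_binomPMFReal]
        field_simp

/-- **Le Cam's theorem.** The total variation distance between a Binomial(n,p)
random variable and a Poisson(np) random variable is at most `9 p`. -/
theorem le_cam (n : ℕ) (p : ℝ) (hp0 : 0 ≤ p) (hp1 : p ≤ 1) (A : Set ℕ) :
    |(∑' k : ℕ, A.indicator (binomPMFReal n p) k) -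
      (∑' k : ℕ, A.indicator (poissonPMFRealFn ((n : ℝ) * p)) k)| ≤ 9 * p := by
  rcases eq_or_ne n 0 with rfl | hn
  · simp [binomPMFReal_eq_poissonPMFRealFn_zero (Or.inl rfl), hp0]
  rcases hp0.eq_or_lt with rfl | hp
  · simp [binomPMFReal_eq_poissonPMFRealFn_zero (Or.inr rfl)]
  obtain ⟨N, rfl⟩ := Nat.exists_eq_succ_of_ne_zero hn
  have h := abs_tsum_indicator_binomPMFReal_sub_poisson_le N hp hp1 A
  push_cast
  linarith
end

section
/- Let m > 0, α ∈ (0, 1/2), and N ∈ ℕ with N ≥ 1. Let H ∈ ℕ satisfy (1−α) m N ≤ H ≤ (1+α) m N. Then for every n ∈ ℕ, the Binomial(H, 1/N) probability mass function at n satisfies C(H,n) (1/N)^n (1 − 1/N)^{H−n} ≤ e^{α m} (1+α)^n p_m(n) + 9/N, where p_m(n) = e^{−m} m^n / n! is the Poisson(m) probability mass function at n. -/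
/-! The core estimate is `C(H,n) q^n (1-q)^(H-n+1) ≤ e^{-Hq} (Hq)^n / n!`. With `k = H-n+1`,
maximising `(1-q)^k e^{Hq}` over `q` reduces it to `(H-1)! e^H / H^H ≤ (k-1)! e^k / k^k`, i.e. to
the monotonicity of `k! e^k / k^(k+1)`, which amounts to `(1 + 1/k)^(k+1) ≥ e`.

For `q = 1/N ≤ 1/2`, dividing by `1 - q` costs at most `2q` because a Poisson weight is at most
`1`, and `(1-α)m ≤ H/N ≤ (1+α)m` bounds the `Poisson(H/N)` weight by the stated multiple of the
`Poisson(m)` weight. For `N = 1` the left side is a binomial weight, hence at most `1`. -/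

open Real Nat

lemma pow_le_pow_mul_exp_sub {x : ℝ} (hx : 0 ≤ x) (k : ℕ) :
    x ^ k ≤ (k : ℝ) ^ k * exp (x - k) := by
  rcases k.eq_zero_or_pos with rfl | hk
  · simpa using one_le_exp hx
  have hk' : (0 : ℝ) < k := by exact_mod_cast hk
  calc x ^ k = (k : ℝ) ^ k * (x / k) ^ k := by rw [div_pow]; field_simp
    _ ≤ (k : ℝ) ^ k * exp (x / k - 1) ^ k := by
        gcongr
        linarith [add_one_le_exp (x / k - 1)]
    _ = (k : ℝ) ^ k * exp (x - k) := by
        rw [← exp_nat_mul]; congr 2; field_simp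

lemma exp_one_mul_pow_le_succ_pow (k : ℕ) :
    exp 1 * (k : ℝ) ^ (k + 1) ≤ ((k : ℝ) + 1) ^ (k + 1) := by
  have h := one_sub_div_pow_le_exp_neg (t := 1) (n := k + 1) (by push_cast; linarith)
  have e : (1 : ℝ) - 1 / ((k + 1 : ℕ) : ℝ) = k / (k + 1) := by push_cast; field_simp; ring
  rw [e, div_pow, exp_neg, div_le_iff₀ (by positivity)] at h
  calc exp 1 * (k : ℝ) ^ (k + 1) ≤ exp 1 * ((exp 1)⁻¹ * ((k : ℝ) + 1) ^ (k + 1)) := by gcongr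
    _ = ((k : ℝ) + 1) ^ (k + 1) := by field_simp

lemma antitoneOn_factorial_mul_exp_div_pow_succ :
    AntitoneOn (fun k : ℕ => (k ! : ℝ) * exp k / (k : ℝ) ^ (k + 1)) {k | 1 ≤ k} := by
  refine antitoneOn_nat_Ici_of_succ_le fun k hk => ?_
  have hk' : (0 : ℝ) < k := by exact_mod_cast hk
  have key := exp_one_mul_pow_le_succ_pow k
  push_cast
  rw [factorial_succ, exp_add, div_le_div_iff₀ (by positivity) (by positivity)]
  push_cast
  calc ((k : ℝ) + 1) * k ! * (exp k * exp 1) * (k : ℝ) ^ (k + 1)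
      = ((k : ℝ) + 1) * k ! * exp k * (exp 1 * (k : ℝ) ^ (k + 1)) := by ring
    _ ≤ ((k : ℝ) + 1) * k ! * exp k * ((k : ℝ) + 1) ^ (k + 1) := by gcongr
    _ = k ! * exp k * ((k : ℝ) + 1) ^ (k + 1 + 1) := by ring

lemma descFactorial_mul_exp_mul_pow_le {H n j : ℕ} (hn : 1 ≤ n) (hH : H = n + j) :
    (H.descFactorial n : ℝ) * exp H * ((j : ℝ) + 1) ^ (j + 1)
      ≤ exp ((j : ℝ) + 1) * H ^ (H + 1) := by
  have hmono := antitoneOn_factorial_mul_exp_div_pow_succ (a := j + 1) (b := H)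
    (by simp) (by simp; omega) (by omega)
  have hH₀ : (0 : ℝ) < H := by exact_mod_cast (by omega : 0 < H)
  have hfact : H ! = j ! * H.descFactorial n := by
    rw [show j = H - n by omega]; exact (factorial_mul_descFactorial (by omega)).symm
  simp only [hfact, factorial_succ, cast_mul] at hmono
  rw [div_le_div_iff₀ (by positivity) (by positivity)] at hmono
  push_cast at hmono
  refine le_of_mul_le_mul_left ?_ (by positivity : (0 : ℝ) < j ! * ((j : ℝ) + 1))
  calc _ = (j ! : ℝ) * H.descFactorial n * exp H * ((j : ℝ) + 1) ^ (j + 1 + 1) := by ring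
    _ ≤ (((j : ℝ) + 1) * j !) * exp ((j : ℝ) + 1) * (H : ℝ) ^ (H + 1) := hmono
    _ = _ := by ring

lemma descFactorial_mul_pow_mul_one_sub_pow_le {H n : ℕ} (hn : n ≤ H) {q : ℝ}
    (hq₀ : 0 ≤ q) (hq₁ : q ≤ 1) :
    (H.descFactorial n : ℝ) * q ^ n * (1 - q) ^ (H - n + 1) ≤ exp (-(H * q)) * (H * q) ^ n := by
  obtain ⟨j, hj⟩ : ∃ j, H - n = j := ⟨_, rfl⟩
  have hH : H = n + j := by omega
  have hq : 0 ≤ 1 - q := sub_nonneg.2 hq₁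
  rw [hj]
  rcases Nat.eq_zero_or_pos n with rfl | hn
  · -- the maximising `q = 1 - (j + 1) / j` is negative, so compare with `(1 - q) ^ j` instead
    simp only [hH, zero_add, descFactorial_zero, cast_one, pow_zero, mul_one, one_mul]
    calc (1 - q) ^ (j + 1) ≤ (1 - q) ^ j := pow_le_pow_of_le_one hq (by linarith) (by omega)
      _ ≤ exp (-q) ^ j := by gcongr; exact one_sub_le_exp_neg q
      _ = exp (-(j * q)) := by rw [← exp_nat_mul]; ring_nf
  have hH₀ : (0 : ℝ) < H := by exact_mod_cast (by omega : 0 < H)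
  have hcomb := descFactorial_mul_exp_mul_pow_le hn hH
  have hamgm := pow_le_pow_mul_exp_sub (x := H * (1 - q)) (by positivity) (j + 1)
  push_cast at hamgm
  have hexp : exp (H * (1 - q) - ((j : ℝ) + 1))
      = exp (-(H * q)) * exp (-((j : ℝ) + 1)) * exp H := by
    rw [← exp_add, ← exp_add]; ring_nf
  have hexp₁ : exp ((j : ℝ) + 1) * exp (-((j : ℝ) + 1)) = 1 := by rw [← exp_add]; simp
  refine le_of_mul_le_mul_left ?_ (pow_pos hH₀ (j + 1))
  calc _ = (H.descFactorial n : ℝ) * q ^ n * (H * (1 - q)) ^ (j + 1) := by rw [mul_pow]; ring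
    _ ≤ (H.descFactorial n : ℝ) * q ^ n *
        (((j : ℝ) + 1) ^ (j + 1) * exp (H * (1 - q) - ((j : ℝ) + 1))) := by gcongr
    _ = q ^ n * exp (-(H * q)) * exp (-((j : ℝ) + 1)) *
        ((H.descFactorial n : ℝ) * exp H * ((j : ℝ) + 1) ^ (j + 1)) := by rw [hexp]; ring
    _ ≤ q ^ n * exp (-(H * q)) * exp (-((j : ℝ) + 1)) * (exp ((j : ℝ) + 1) * H ^ (H + 1)) := by
        gcongr
    _ = _ := by
        rw [show H + 1 = (j + 1) + n by omega, pow_add]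
        linear_combination (q ^ n * exp (-(H * q)) * (H : ℝ) ^ (j + 1) * (H : ℝ) ^ n) * hexp₁

lemma choose_mul_pow_mul_one_sub_pow_le (H n : ℕ) {q : ℝ} (hq₀ : 0 ≤ q) (hq₁ : q ≤ 1) :
    (H.choose n : ℝ) * q ^ n * (1 - q) ^ (H - n + 1) ≤ exp (-(H * q)) * (H * q) ^ n / n ! := by
  rcases le_or_gt n H with hn | hn
  · rw [le_div_iff₀ (by positivity)]
    calc _ = (H.descFactorial n : ℝ) * q ^ n * (1 - q) ^ (H - n + 1) := by
          rw [descFactorial_eq_factorial_mul_choose]; push_cast; ring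
      _ ≤ _ := descFactorial_mul_pow_mul_one_sub_pow_le hn hq₀ hq₁
  · rw [choose_eq_zero_of_lt hn, cast_zero, zero_mul, zero_mul]
    positivity

lemma choose_mul_pow_mul_one_sub_pow_le_one (H n : ℕ) {q : ℝ} (hq₀ : 0 ≤ q) (hq₁ : q ≤ 1) :
    (H.choose n : ℝ) * q ^ n * (1 - q) ^ (H - n) ≤ 1 := by
  rcases le_or_gt n H with hn | hn
  · have hq : 0 ≤ 1 - q := sub_nonneg.2 hq₁
    calc _ = q ^ n * (1 - q) ^ (H - n) * H.choose n := by ring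
      _ ≤ ∑ k ∈ Finset.range (H + 1), q ^ k * (1 - q) ^ (H - k) * H.choose k :=
          Finset.single_le_sum (f := fun k => q ^ k * (1 - q) ^ (H - k) * H.choose k)
            (fun k _ => by positivity) (Finset.mem_range_succ_iff.2 hn)
      _ = 1 := by rw [← add_pow]; simp
  · rw [choose_eq_zero_of_lt hn]; simp

lemma exp_neg_mul_pow_div_factorial_le_one {x : ℝ} (hx : 0 ≤ x) (n : ℕ) :
    exp (-x) * x ^ n / n ! ≤ 1 := by
  rw [mul_div_assoc, exp_neg, inv_mul_le_one₀ (exp_pos x)]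
  exact pow_div_factorial_le_exp x hx n

lemma le_add_two_mul_of_mul_one_sub_le {x p q : ℝ} (hq₀ : 0 ≤ q) (hq : q ≤ 1 / 2)
    (hp : p ≤ 1) (h : x * (1 - q) ≤ p) : x ≤ p + 2 * q := by
  nlinarith

theorem binom_pmf_le_poisson_pmf_general (m : ℝ) (α : ℝ)
    (N : ℕ) (hN : 1 ≤ N) (H : ℕ)
    (hH1 : (1 - α) * m * N ≤ (H : ℝ)) (hH2 : (H : ℝ) ≤ (1 + α) * m * N) (n : ℕ) :
    (H.choose n : ℝ) * (1 / N) ^ n * (1 - 1 / N) ^ (H - n)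
      ≤ Real.exp (α * m) * (1 + α) ^ n * (Real.exp (-m) * m ^ n / (Nat.factorial n : ℝ))
        + 9 / N := by
  have hN₀ : (0 : ℝ) < N := by exact_mod_cast hN
  have hq₀ : (0 : ℝ) ≤ 1 / N := by positivity
  have hq₁ : (1 : ℝ) / N ≤ 1 := by rw [div_le_one hN₀]; exact_mod_cast hN
  have hr₀ : (0 : ℝ) ≤ H * (1 / N) := by positivity
  have hr₁ : (1 - α) * m ≤ H * (1 / N) := by rw [mul_one_div, le_div_iff₀ hN₀]; exact hH1
  have hr₂ : H * (1 / N) ≤ (1 + α) * m := by rw [mul_one_div, div_le_iff₀ hN₀]; exact hH2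
  set P := exp (-(H * (1 / N : ℝ))) * (H * (1 / N : ℝ)) ^ n / n ! with hP
  have hP₀ : 0 ≤ P := by positivity
  have hPm : P ≤ exp (α * m) * (1 + α) ^ n * (exp (-m) * m ^ n / n !) :=
    calc P ≤ exp (-((1 - α) * m)) * ((1 + α) * m) ^ n / n ! := by rw [hP]; gcongr
      _ = _ := by rw [mul_pow, show -((1 - α) * m) = α * m + -m by ring, exp_add]; ring
  have hbinom := choose_mul_pow_mul_one_sub_pow_le H n hq₀ hq₁
  rw [pow_succ, ← mul_assoc] at hbinom
  rcases hN.eq_or_lt with rfl | hN₂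
  · calc _ ≤ (1 : ℝ) := choose_mul_pow_mul_one_sub_pow_le_one H n hq₀ hq₁
      _ ≤ _ := by norm_num; linarith
  · have hq₂ : (1 : ℝ) / N ≤ 1 / 2 := by gcongr; exact_mod_cast hN₂
    have h9 : 2 * (1 / N : ℝ) ≤ 9 / N := by rw [mul_one_div]; gcongr; norm_num
    have := le_add_two_mul_of_mul_one_sub_le hq₀ hq₂
      (exp_neg_mul_pow_div_factorial_le_one hr₀ n) hbinom
    linarith

/-- If `(1-α) m N ≤ H ≤ (1+α) m N`, then the Binomial(H, 1/N) probability mass function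
at `n` is at most `e^{αm} (1+α)^n p_m(n) + 9/N`, where `p_m` is the Poisson(m) pmf. -/
theorem binom_pmf_le_poisson_pmf (m : ℝ) (hm : 0 < m) (α : ℝ)
    (hα : α ∈ Set.Ioo (0 : ℝ) (1/2)) (N : ℕ) (hN : 1 ≤ N) (H : ℕ)
    (hH1 : (1 - α) * m * N ≤ (H : ℝ)) (hH2 : (H : ℝ) ≤ (1 + α) * m * N) (n : ℕ) :
    (H.choose n : ℝ) * (1 / N) ^ n * (1 - 1 / N) ^ (H - n)
      ≤ Real.exp (α * m) * (1 + α) ^ n * (Real.exp (-m) * m ^ n / (Nat.factorial n : ℝ))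
        + 9 / N :=
  binom_pmf_le_poisson_pmf_general m α N hN H hH1 hH2 n
end

section
/- Let m > 0 and let L be a finite nonempty index set. There exists a constant C > 0, depending only on m and |L|, such that for every α ∈ (0, 1/2), every integer N ≥ 1, every family of integers (H_z)_{z ∈ L} with (1−α) m N < H_z < (1+α) m N for all z ∈ L, and every (n_z)_{z ∈ L} ∈ ℕ^{L}, the following holds: if (S_z)_{z ∈ L} is a family of independent random variables with S_z having the Binomial(H_z, 1/N) distribution, then P[ S_z = n_z for all z ∈ L ] ≤ e^{α m |L|} (1+α)^{Σ_{z ∈ L} n_z} Π_{z ∈ L} p_m(n_z) + C/N, where p_m(n) = e^{−m} m^n / n! is the Poisson(m) probability mass function. -/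
/-!
Each coordinate is compared with a Poisson mass: `C(H,n) qⁿ (1-q)^(H-n) ≤ p_{Hq}(n) / (1-q)ⁿ`,
and since `Hq = H/N` lies between `(1-α)m` and `(1+α)m`, this is at most
`e^{αm} (1+α)ⁿ p_m(n) · (N/(N-1))ⁿ`. The factor `(N/(N-1))ⁿ` costs only `O(1/N)` additively,
uniformly in `n`, because `n (N/(N-1))ⁿ e^{αm} (1+α)ⁿ p_m(n) ≤ 3m e^{3m}`. Finally, perturbing each
of `|L|` factors bounded by `e^m` by at most `ε` moves their product by at most
`|L| ε (e^m + ε)^{|L|-1}`.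
-/

open MeasureTheory ProbabilityTheory Finset Real
open scoped Nat

noncomputable def binomialMass (H : ℕ) (q : ℝ) (k : ℕ) : ℝ :=
  H.choose k * q ^ k * (1 - q) ^ (H - k)

noncomputable def poissonMass (μ : ℝ) (n : ℕ) : ℝ :=
  exp (-μ) * μ ^ n / n !

noncomputable def tiltedPoissonMass (m α : ℝ) (n : ℕ) : ℝ :=
  exp (α * m) * (1 + α) ^ n * poissonMass m n

section Binomial

variable (H : ℕ) {q : ℝ}

lemma binomialMass_nonneg (hq0 : 0 ≤ q) (hq1 : q ≤ 1) (k : ℕ) : 0 ≤ binomialMass H q k := by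
  have : 0 ≤ 1 - q := by linarith
  unfold binomialMass
  positivity

lemma binomialMass_le_one (hq0 : 0 ≤ q) (hq1 : q ≤ 1) (k : ℕ) : binomialMass H q k ≤ 1 := by
  rcases le_or_gt k H with hk | hk
  · calc binomialMass H q k ≤ ∑ j ∈ range (H + 1), binomialMass H q j :=
          single_le_sum (fun j _ => binomialMass_nonneg H hq0 hq1 j) (mem_range_succ_iff.2 hk)
      _ = (q + (1 - q)) ^ H := by
          rw [add_pow]
          exact sum_congr rfl fun j _ => by rw [binomialMass]; ring
      _ = 1 := by simp
  · simp [binomialMass, Nat.choose_eq_zero_of_lt hk]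

lemma binomialMass_le_poissonMass_div (hq0 : 0 ≤ q) (hq1 : q < 1) (k : ℕ) :
    binomialMass H q k ≤ poissonMass (H * q) k / (1 - q) ^ k := by
  have hq : 0 < 1 - q := by linarith
  rcases le_or_gt k H with hk | hk
  · have hchoose : (H.choose k : ℝ) ≤ H ^ k / k ! := Nat.choose_le_pow_div k H
    have hpow : (1 - q) ^ H ≤ exp (-(H * q)) :=
      calc (1 - q) ^ H ≤ exp (-q) ^ H := pow_le_pow_left₀ hq.le (one_sub_le_exp_neg q) H
        _ = exp (-(H * q)) := by rw [← exp_nat_mul]; ring_nf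
    calc binomialMass H q k = H.choose k * q ^ k * (1 - q) ^ H / (1 - q) ^ k := by
          rw [binomialMass, pow_sub₀ _ hq.ne' hk]; ring
      _ ≤ H ^ k / k ! * q ^ k * exp (-(H * q)) / (1 - q) ^ k := by gcongr
      _ = poissonMass (H * q) k / (1 - q) ^ k := by rw [poissonMass, mul_pow]; ring
  · rw [binomialMass, Nat.choose_eq_zero_of_lt hk, Nat.cast_zero, zero_mul, zero_mul]
    unfold poissonMass
    positivity

end Binomial

lemma poissonMass_le_tiltedPoissonMass {m α μ : ℝ} (hμ : 0 ≤ μ) (h1 : (1 - α) * m ≤ μ)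
    (h2 : μ ≤ (1 + α) * m) (n : ℕ) :
    poissonMass μ n ≤ tiltedPoissonMass m α n := by
  have hexp : exp (-μ) ≤ exp (α * m) * exp (-m) := by
    rw [← exp_add]; exact exp_le_exp.2 (by linarith)
  have hpow : μ ^ n ≤ (1 + α) ^ n * m ^ n := by
    rw [← mul_pow]; exact pow_le_pow_left₀ hμ h2 n
  calc poissonMass μ n = exp (-μ) * μ ^ n / n ! := rfl
    _ ≤ exp (α * m) * exp (-m) * ((1 + α) ^ n * m ^ n) / n ! := by gcongr
    _ = tiltedPoissonMass m α n := by rw [tiltedPoissonMass, poissonMass]; ring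

lemma tiltedPoissonMass_nonneg {m α : ℝ} (hm : 0 ≤ m) (hα : 0 ≤ 1 + α) (n : ℕ) :
    0 ≤ tiltedPoissonMass m α n := by
  unfold tiltedPoissonMass poissonMass
  positivity

lemma binomialMass_le_tiltedPoissonMass_div_pow {m α q : ℝ} {H : ℕ} (hq0 : 0 ≤ q) (hq1 : q < 1)
    (h1 : (1 - α) * m ≤ H * q) (h2 : H * q ≤ (1 + α) * m) (n : ℕ) :
    binomialMass H q n ≤ tiltedPoissonMass m α n / (1 - q) ^ n :=
  (binomialMass_le_poissonMass_div H hq0 hq1 n).trans <|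
    div_le_div_of_nonneg_right (poissonMass_le_tiltedPoissonMass (by positivity) h1 h2 n)
      (pow_nonneg (by linarith) n)

lemma pow_sub_one_le_mul_pow {r : ℝ} (hr : 1 ≤ r) (n : ℕ) : r ^ n - 1 ≤ n * (r - 1) * r ^ n := by
  have hsum : ∑ i ∈ range n, r ^ i ≤ n * r ^ n := by
    simpa using sum_le_card_nsmul (range n) (r ^ ·) (r ^ n)
      fun i hi => pow_le_pow_right₀ hr (mem_range.1 hi).le
  rw [← geom_sum_mul]
  nlinarith

lemma natCast_mul_pow_div_factorial_le {x : ℝ} (hx : 0 ≤ x) (n : ℕ) :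
    n * x ^ n / n ! ≤ x * exp x := by
  cases n with
  | zero => simp; positivity
  | succ k =>
    calc ((k + 1 : ℕ) : ℝ) * x ^ (k + 1) / (k + 1)! = x * (x ^ k / k !) := by
          push_cast [Nat.factorial_succ]; field_simp; ring
      _ ≤ x * exp x := by gcongr; exact pow_div_factorial_le_exp x hx k

section Tilted

variable {m α : ℝ} (hm : 0 ≤ m) (hα0 : 0 ≤ α) (hα1 : α ≤ 1 / 2)
include hm hα0 hα1

lemma tiltedPoissonMass_le_exp (n : ℕ) :
    tiltedPoissonMass m α n ≤ exp m := by
  have hpow := pow_div_factorial_le_exp ((1 + α) * m) (by positivity) n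
  calc tiltedPoissonMass m α n
        = exp (α * m) * exp (-m) * (((1 + α) * m) ^ n / n !) := by
          rw [tiltedPoissonMass, poissonMass, mul_pow]; ring
    _ ≤ exp (α * m) * exp (-m) * exp ((1 + α) * m) := by gcongr
    _ ≤ exp m := by
          rw [← exp_add, ← exp_add]; exact exp_le_exp.2 (by nlinarith)

lemma natCast_mul_tiltedPoissonMass_mul_pow_le {r : ℝ} (hr0 : 0 ≤ r) (hr2 : r ≤ 2) (n : ℕ) :
    n * tiltedPoissonMass m α n * r ^ n ≤ 3 * m * exp (3 * m) := by
  have hs : (1 + α) * r * m ≤ 3 * m := by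
    have : (1 + α) * r ≤ 3 := by nlinarith
    nlinarith
  calc n * tiltedPoissonMass m α n * r ^ n
        = exp (α * m) * exp (-m) * (n * ((1 + α) * r * m) ^ n / n !) := by
          simp only [tiltedPoissonMass, poissonMass, mul_pow]; ring
    _ ≤ exp (α * m) * exp (-m) * ((1 + α) * r * m * exp ((1 + α) * r * m)) := by
          gcongr
          exact natCast_mul_pow_div_factorial_le (by positivity) n
    _ ≤ 1 * (3 * m * exp (3 * m)) := by
          gcongr
          rw [← exp_add]; exact exp_le_one_iff.2 (by nlinarith)
    _ = 3 * m * exp (3 * m) := one_mul _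

lemma binomialMass_le_add_of_two_le {N H : ℕ} (hN : 2 ≤ N) (hH1 : (1 - α) * m * N ≤ H)
    (hH2 : H ≤ (1 + α) * m * N) (n : ℕ) :
    binomialMass H (1 / N) n
      ≤ tiltedPoissonMass m α n + 6 * m * exp (3 * m) / N := by
  have hN2 : (2 : ℝ) ≤ N := by exact_mod_cast hN
  have hN1 : (0 : ℝ) < N - 1 := by linarith
  set a := tiltedPoissonMass m α n
  set r : ℝ := (1 - 1 / N)⁻¹ with hr
  have hr_sub : r - 1 = 1 / (N - 1) := by
    rw [hr, one_sub_div (by positivity), inv_div]; field_simp; ring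
  have hr1 : 1 ≤ r := by
    have : 0 ≤ 1 / ((N : ℝ) - 1) := by positivity
    linarith
  have hr_sub_le : r - 1 ≤ 2 / N := by
    rw [hr_sub, div_le_div_iff₀ hN1 (by linarith)]; linarith
  have hr2 : r ≤ 2 := by
    have : 2 / (N : ℝ) ≤ 1 := by rw [div_le_one (by linarith)]; exact hN2
    linarith
  have hmass : binomialMass H (1 / N) n ≤ a * r ^ n := by
    have hq1 : 1 / (N : ℝ) < 1 := by rw [div_lt_one (by linarith)]; linarith
    have hμ1 : (1 - α) * m ≤ H * (1 / N) := by
      rw [mul_one_div, le_div_iff₀ (by linarith)]; exact hH1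
    have hμ2 : H * (1 / N) ≤ (1 + α) * m := by
      rw [mul_one_div, div_le_iff₀ (by linarith)]; exact hH2
    calc binomialMass H (1 / N) n ≤ a / (1 - 1 / N) ^ n :=
          binomialMass_le_tiltedPoissonMass_div_pow (by positivity) hq1 hμ1 hμ2 n
      _ = a * r ^ n := by rw [hr, inv_pow, div_eq_mul_inv]
  have ha : 0 ≤ a := tiltedPoissonMass_nonneg hm (by linarith) n
  calc binomialMass H (1 / N) n ≤ a + a * (r ^ n - 1) := by linarith
    _ ≤ a + (r - 1) * (n * a * r ^ n) := by
          nlinarith [mul_le_mul_of_nonneg_left (pow_sub_one_le_mul_pow hr1 n) ha]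
    _ ≤ a + 2 / N * (3 * m * exp (3 * m)) := by
          have hweighted : n * a * r ^ n ≤ 3 * m * exp (3 * m) :=
            natCast_mul_tiltedPoissonMass_mul_pow_le hm hα0 hα1 (by linarith) hr2 n
          gcongr
    _ = a + 6 * m * exp (3 * m) / N := by ring

lemma binomialMass_le_add {N H : ℕ} (hN : 1 ≤ N) (hH1 : (1 - α) * m * N ≤ H)
    (hH2 : H ≤ (1 + α) * m * N) (n : ℕ) :
    binomialMass H (1 / N) n
      ≤ tiltedPoissonMass m α n + max 1 (6 * m * exp (3 * m)) / N := by
  rcases hN.eq_or_lt with rfl | hN2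
  · have ha : 0 ≤ tiltedPoissonMass m α n := tiltedPoissonMass_nonneg hm (by linarith) n
    have hb := binomialMass_le_one H (q := 1 / (1 : ℕ)) (by norm_num) (by norm_num) n
    rw [Nat.cast_one, div_one] at hb ⊢
    linarith [le_max_left 1 (6 * m * exp (3 * m))]
  · calc binomialMass H (1 / N) n
        ≤ tiltedPoissonMass m α n + 6 * m * exp (3 * m) / N :=
          binomialMass_le_add_of_two_le hm hα0 hα1 hN2 hH1 hH2 n
      _ ≤ _ := by gcongr; exact le_max_right _ _

end Tilted

lemma Finset.prod_le_prod_add_card_mul {ι : Type*} (s : Finset ι) {a b : ι → ℝ} {A ε : ℝ}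
    (hε : 0 ≤ ε) (ha : ∀ i ∈ s, 0 ≤ a i) (haA : ∀ i ∈ s, a i ≤ A) (hb : ∀ i ∈ s, 0 ≤ b i)
    (hba : ∀ i ∈ s, b i ≤ a i + ε) :
    ∏ i ∈ s, b i ≤ ∏ i ∈ s, a i + #s * ε * (A + ε) ^ (#s - 1) := by
  classical
  induction s using Finset.induction_on with
  | empty => simp
  | insert i s hi ih =>
    simp only [forall_mem_insert] at ha haA hb hba
    rw [prod_insert hi, prod_insert hi, card_insert_of_notMem hi, Nat.add_sub_cancel]
    have ih := ih ha.2 haA.2 hb.2 hba.2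
    have hP : ∏ j ∈ s, a j ≤ (A + ε) ^ #s :=
      (prod_le_prod ha.2 fun j hj => (haA.2 j hj).trans (le_add_of_nonneg_right hε)).trans_eq
        (prod_const _)
    have hpow : (A + ε) * (A + ε) ^ (#s - 1) * #s = (A + ε) ^ #s * #s := by
      rcases Nat.eq_zero_or_pos #s with h | h
      · simp [h]
      · rw [mul_pow_sub_one h.ne']
    calc b i * ∏ j ∈ s, b j
        ≤ (a i + ε) * (∏ j ∈ s, a j + #s * ε * (A + ε) ^ (#s - 1)) :=
          mul_le_mul hba.1 ih (prod_nonneg hb.2) (by linarith [ha.1])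
      _ = a i * ∏ j ∈ s, a j + ε * ∏ j ∈ s, a j + (a i + ε) * (#s * ε * (A + ε) ^ (#s - 1)) := by
          ring
      _ ≤ a i * ∏ j ∈ s, a j + ε * (A + ε) ^ #s + (A + ε) * (#s * ε * (A + ε) ^ (#s - 1)) := by
          have hAε : 0 ≤ A + ε := by linarith [ha.1, haA.1]
          gcongr
          exact haA.1
      _ = a i * ∏ j ∈ s, a j + ((#s + 1 : ℕ) : ℝ) * ε * (A + ε) ^ #s := by
          push_cast; linear_combination ε * hpow

/-- For independent random variables `S_z ∼ Binomial(H_z, 1/N)` over a finite index set,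
with `(1-α) m N < H_z < (1+α) m N` for every `z`, the probability that `S_z = n_z` for
all `z` is at most `e^{α m |L|} (1+α)^{Σ n_z} Π p_m(n_z) + C/N`, where `p_m` is the
Poisson(m) pmf and `C` depends only on `m` and `|L|`. -/
theorem binom_family_pmf_le_poisson {L : Type} [Fintype L] [Nonempty L]
    (m : ℝ) (hm : 0 < m) :
    ∃ C : ℝ, 0 < C ∧
      ∀ α ∈ Set.Ioo (0 : ℝ) (1/2), ∀ N : ℕ, 1 ≤ N →
        ∀ H : L → ℕ, (∀ z, (1 - α) * m * N < (H z : ℝ) ∧ (H z : ℝ) < (1 + α) * m * N) →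
          ∀ n : L → ℕ,
            ∀ (Ω : Type) (_ : MeasurableSpace Ω) (P : Measure Ω), IsProbabilityMeasure P →
              ∀ S : L → Ω → ℕ, (∀ z, Measurable (S z)) →
                iIndepFun S P →
                (∀ z k, P {ω | S z ω = k}
                  = ENNReal.ofReal (((H z).choose k : ℝ) * (1 / (N : ℝ)) ^ k
                      * (1 - 1 / (N : ℝ)) ^ (H z - k))) →
                (P {ω | ∀ z, S z ω = n z}).toReal
                  ≤ Real.exp (α * m * (Fintype.card L : ℝ))
                      * (1 + α) ^ (∑ z, n z)
                      * (∏ z, Real.exp (-m) * m ^ (n z) / (Nat.factorial (n z) : ℝ))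
                    + C / N := by
  set c := max 1 (6 * m * exp (3 * m))
  have hc : 0 ≤ c := zero_le_one.trans (le_max_left _ _)
  refine ⟨Fintype.card L * c * (exp m + c) ^ (Fintype.card L - 1), by positivity, ?_⟩
  rintro α ⟨hα0, hα1⟩ N hN H hH n Ω _ P _ S - hS hlaw
  have hN1 : (1 : ℝ) ≤ N := by exact_mod_cast hN
  have hN0 : (0 : ℝ) < N := by linarith
  have hq0 : (0 : ℝ) ≤ 1 / N := by positivity
  have hq1 : 1 / (N : ℝ) ≤ 1 := by rw [div_le_one hN0]; exact hN1
  have hprob : (P {ω | ∀ z, S z ω = n z}).toReal = ∏ z, binomialMass (H z) (1 / N) (n z) := by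
    have hset : {ω | ∀ z, S z ω = n z} = ⋂ z, S z ⁻¹' {n z} := by ext; simp
    rw [hset, hS.meas_iInter fun z => ⟨{n z}, measurableSet_singleton _, rfl⟩,
      ENNReal.toReal_prod]
    refine prod_congr rfl fun z _ => ?_
    change (P {ω | S z ω = n z}).toReal = _
    rw [hlaw]
    exact ENNReal.toReal_ofReal (binomialMass_nonneg (H z) hq0 hq1 (n z))
  have hpoisson : exp (α * m * Fintype.card L) * (1 + α) ^ (∑ z, n z)
      * ∏ z, exp (-m) * m ^ n z / (n z)! = ∏ z, tiltedPoissonMass m α (n z) := by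
    simp only [tiltedPoissonMass]
    rw [prod_mul_distrib, prod_mul_distrib, prod_const, prod_pow_eq_pow_sum, card_univ,
      ← exp_nat_mul]
    simp only [poissonMass]
    ring_nf
  rw [hprob, hpoisson]
  calc ∏ z, binomialMass (H z) (1 / N) (n z)
      ≤ ∏ z, tiltedPoissonMass m α (n z)
          + Fintype.card L * (c / N) * (exp m + c / N) ^ (Fintype.card L - 1) :=
        prod_le_prod_add_card_mul univ (by positivity)
          (fun z _ => tiltedPoissonMass_nonneg hm.le (by linarith) (n z))
          (fun z _ => tiltedPoissonMass_le_exp hm.le hα0.le hα1.le (n z))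
          (fun z _ => binomialMass_nonneg (H z) hq0 hq1 (n z))
          (fun z _ => binomialMass_le_add hm.le hα0.le hα1.le hN (hH z).1.le (hH z).2.le (n z))
    _ ≤ ∏ z, tiltedPoissonMass m α (n z)
          + Fintype.card L * (c / N) * (exp m + c) ^ (Fintype.card L - 1) := by
        gcongr
        exact div_le_self hc hN1
    _ = _ := by ring
end

section
/- Let L be a finite set equipped with a total order ⪯, and let (U^{w,z}_{i,j})_{i,j ∈ ℕ, w,z ∈ L, w ⪯ z} be a family of independent random variables each uniformly distributed on [0,1]; extend it to all pairs by setting U^{w,z}_{i,j} = U^{z,w}_{j,i} when z ≺ w. Let (g_{w,z})_{w,z ∈ L} be a symmetric matrix with entries in [0,1], and let α ∈ (0, 1/2). For M ∈ ℕ, w ∈ L, V ⊆ L∖{w}, E ⊆ V and 𝐤 = (k_z)_{z ∈ V} ∈ {1, …, ⌈M(1+α)⌉}^{V}, let F^{M}_{w,V,E,𝐤} be the event that both: (i) | { j ∈ {1,…,⌈M(1+α)⌉} : U^{w,z}_{j,k_z} ≤ g_{w,z} for all z ∈ E and U^{w,z}_{j,k_z} > g_{w,z} for all z ∈ V∖E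 } | ≤ M g^{E}_{V,w} (1+α)², and (ii) | { j ∈ {1,…,⌊M(1−α)⌋} : U^{w,z}_{j,k_z} ≤ g_{w,z} for all z ∈ E and U^{w,z}_{j,k_z} > g_{w,z} for all z ∈ V∖E } | ≥ M g^{E}_{V,w} (1−α)², where g^{E}_{V,w} = (Π_{z ∈ E} g_{w,z}) (Π_{z ∈ V∖E} (1 − g_{w,z})). Let F^{M} be the intersection of F^{M}_{w,V,E,𝐤} over all w ∈ L, all V ⊆ L∖{w}, all E ⊆ V, and all 𝐤 ∈ {1,…,⌈M(1+α)⌉}^{V}. Then there exist constants c > 0 and M₀ ≥ 1, depending on L, (g_{w,z}) and α, such that P(F^{M}) ≥ 1 − exp(−cM) for all integers M ≥ M₀. -/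
/-!
Fix `w`, `V`, `E ⊆ V` and `k`. Whether row `j` shows the pattern `E` (that is,
`U^{w,z}_{j,k_z} ≤ g_{w,z}` exactly for `z ∈ E`) depends only on the variables `U^{w,z}_{j,k_z}`,
`z ∈ V`, and distinct pairs `(j, z)` read distinct variables. So these events are independent
across `j`, each of probability `g^E_{V,w}`, and both counts are binomial. Chernoff's bound at
`t = log (1 ± α)` makes each deviation at most `e · exp (-c M)`, with `c` proportional to the
smallest nonzero value of `g^E_{V,w}` (a pattern of probability zero almost surely never shows).
There are only polynomially many (in `M`) tuples `(w, V, E, k)`, so the union bound costs a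
polynomial factor, which halving `c` absorbs.
-/

open MeasureTheory ProbabilityTheory

/-- Extension of a family of random variables indexed by ordered pairs `(w,z)` with
`w ≤ z` (and a pair of integer indices) to all pairs, by the symmetry rule
`U^{w,z}_{i,j} = U^{z,w}_{j,i}`. -/
noncomputable def Uext {L Ω : Type} [LinearOrder L]
    (U : {p : (L × L) × ℕ × ℕ // p.1.1 ≤ p.1.2} → Ω → ℝ)
    (w z : L) (i j : ℕ) : Ω → ℝ :=
  if h : w ≤ z then U ⟨((w, z), (i, j)), h⟩ else U ⟨((z, w), (j, i)), le_of_not_ge h⟩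

open Real Filter

/-- The rate of the multiplicative Chernoff bound `P (S ≥ x μ) ≤ exp (-μ · chernoffRate x)`
for a binomial `S` of mean `μ`. -/
noncomputable def chernoffRate (x : ℝ) : ℝ := x * log x - x + 1

lemma chernoffRate_pos {x : ℝ} (hx : 0 < x) (hx1 : x ≠ 1) : 0 < chernoffRate x := by
  have h := log_lt_sub_one_of_pos (inv_pos.mpr hx) (inv_ne_one.mpr hx1)
  rw [log_inv] at h
  have := mul_lt_mul_of_pos_left h hx
  rw [mul_sub, mul_inv_cancel₀ hx.ne'] at this
  unfold chernoffRate
  linarith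

-- `N` stands for `⌈m (1 + α)⌉` here and for `⌊m (1 - α)⌋` below: the rounding costs at most
-- `p α ≤ 1` in the exponent.
lemma upper_exponent_le {α m p N : ℝ} (hα : 0 < α) (hα1 : α ≤ 1) (hm : 0 ≤ m) (hp0 : 0 ≤ p)
    (hp1 : p ≤ 1) (hN : N ≤ m * (1 + α) + 1) :
    -log (1 + α) * (m * p * (1 + α) ^ 2) + N * (p * (exp (log (1 + α)) - 1))
      ≤ 1 - m * p * chernoffRate (1 + α) := by
  have hh := chernoffRate_pos (by linarith : 0 < 1 + α) (by linarith)
  have hN' : N * (p * α) ≤ (m * (1 + α) + 1) * (p * α) := by gcongr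
  rw [exp_log (by linarith)]
  unfold chernoffRate at *
  nlinarith [mul_nonneg (mul_nonneg hm hp0) hh.le]

lemma lower_exponent_le {α m p N : ℝ} (hα : 0 < α) (hα1 : α ≤ 1 / 2) (hm : 0 ≤ m)
    (hp0 : 0 ≤ p) (hp1 : p ≤ 1) (hN : m * (1 - α) - 1 ≤ N) :
    -log (1 - α) * (m * p * (1 - α) ^ 2) + N * (p * (exp (log (1 - α)) - 1))
      ≤ 1 - m * p * (chernoffRate (1 - α) / 2) := by
  have hh := chernoffRate_pos (by linarith : 0 < 1 - α) (by linarith)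
  have hN' : (m * (1 - α) - 1) * (p * α) ≤ N * (p * α) := by gcongr
  rw [exp_log (by linarith)]
  unfold chernoffRate at *
  nlinarith [mul_nonneg (mul_nonneg hm hp0) hh.le]

lemma Finite.exists_pos_forall_pos_imp_le {β : Type*} [Finite β] (f : β → ℝ) :
    ∃ c, 0 < c ∧ ∀ x, 0 < f x → c ≤ f x := by
  rcases isEmpty_or_nonempty β with hβ | hβ
  · exact ⟨1, one_pos, fun x => isEmptyElim x⟩
  obtain ⟨x₀, hx₀⟩ := Finite.exists_min fun x => if 0 < f x then f x else 1
  refine ⟨if 0 < f x₀ then f x₀ else 1, by split_ifs <;> simp_all, fun x hx => ?_⟩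
  simpa [hx] using hx₀ x

lemma eventually_mul_pow_mul_exp_neg_le_one (C b : ℝ) (hb : 0 < b) (n : ℕ) :
    ∀ᶠ M : ℕ in atTop, C * (M : ℝ) ^ n * exp (-b * M) ≤ 1 := by
  have h := (tendsto_rpow_mul_exp_neg_mul_atTop_nhds_zero n b hb).const_mul C
  rw [mul_zero] at h
  filter_upwards [(tendsto_natCast_atTop_atTop (R := ℝ)).eventually
    (h.eventually (ge_mem_nhds one_pos))] with M hM
  simpa [mul_assoc] using hM

lemma ofReal_one_sub_le_measure_of_measure_compl_le {Ω : Type*} [MeasurableSpace Ω]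
    {P : Measure Ω} [IsProbabilityMeasure P] {s : Set Ω} {x : ℝ} (hx : 0 ≤ x)
    (h : P sᶜ ≤ ENNReal.ofReal x) : ENNReal.ofReal (1 - x) ≤ P s := by
  have hunion : 1 ≤ P s + P sᶜ := by
    simpa [Set.union_compl_self] using measure_union_le (μ := P) s sᶜ
  rw [ENNReal.ofReal_sub _ hx, ENNReal.ofReal_one]
  exact (tsub_le_tsub_left h 1).trans (tsub_le_iff_right.mpr hunion)

lemma ncard_mem_Icc_eq_sum_indicator {Ω : Type*} (A : ℕ → Set Ω) (N : ℕ) (ω : Ω) :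
    (Set.ncard {j | 1 ≤ j ∧ j ≤ N ∧ ω ∈ A j} : ℝ)
      = (∑ j ∈ Finset.Icc 1 N, (A j).indicator 1) ω := by
  classical
  have : {j | 1 ≤ j ∧ j ≤ N ∧ ω ∈ A j} = ↑((Finset.Icc 1 N).filter fun j => ω ∈ A j) := by
    ext j
    simp [and_assoc]
  rw [this, Set.ncard_coe_finset, Finset.sum_apply]
  simp [Set.indicator_apply, Finset.sum_boole]

lemma exp_mul_indicator {Ω : Type*} (B : Set Ω) (t : ℝ) (ω : Ω) :
    exp (t * B.indicator 1 ω) = B.indicator (fun _ => exp t - 1) ω + 1 := by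
  by_cases h : ω ∈ B <;> simp [h]

section Chernoff

variable {Ω ι : Type*} [MeasurableSpace Ω] {P : Measure Ω} {A : ι → Set Ω} {p : ℝ}

lemma measure_sum_indicator_pos_eq_zero (hA : ∀ j, P (A j) = 0) (s : Finset ι) :
    P {ω | (0 : ℝ) < (∑ j ∈ s, (A j).indicator 1) ω} = 0 := by
  refine measure_mono_null (fun ω hω => ?_)
    ((measure_biUnion_null_iff s.countable_toSet).mpr fun j _ => hA j)
  simp only [Set.mem_iUnion]
  by_contra! h
  rw [Set.mem_ofPred_eq, Finset.sum_apply,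
    Finset.sum_eq_zero fun j hj => Set.indicator_of_notMem (h j hj) _] at hω
  exact lt_irrefl 0 hω

variable [IsProbabilityMeasure P]

lemma integrable_exp_mul_indicator {B : Set Ω} (hB : MeasurableSet B) (t : ℝ) :
    Integrable (fun ω => exp (t * B.indicator 1 ω)) P := by
  simp only [exp_mul_indicator]
  exact ((integrable_const _).indicator hB).add (integrable_const 1)

lemma mgf_indicator {B : Set Ω} (hB : MeasurableSet B) (t : ℝ) :
    mgf (B.indicator 1) P t = 1 + P.real B * (exp t - 1) := by
  rw [mgf]
  simp only [exp_mul_indicator]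
  rw [integral_add ((integrable_const _).indicator hB) (integrable_const 1),
    integral_indicator_const _ hB]
  simp [add_comm]

variable (hAm : ∀ j, MeasurableSet (A j)) (hA : iIndepSet A P)
include hAm hA

lemma integrable_exp_mul_sum_indicator (s : Finset ι) (t : ℝ) :
    Integrable (fun ω => exp (t * (∑ j ∈ s, (A j).indicator 1) ω)) P :=
  (hA.iIndepFun_indicator (β := ℝ)).integrable_exp_mul_sum
    (fun j => measurable_const.indicator (hAm j))
    fun j _ => integrable_exp_mul_indicator (hAm j) t

variable (hp : ∀ j, P (A j) = ENNReal.ofReal p)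
include hp

lemma mgf_sum_indicator_le (hp0 : 0 ≤ p) (s : Finset ι) (t : ℝ) :
    mgf (∑ j ∈ s, (A j).indicator 1) P t ≤ exp (s.card * (p * (exp t - 1))) := by
  have hind : iIndepFun (fun j => (A j).indicator (1 : Ω → ℝ)) P := hA.iIndepFun_indicator
  have hmgf : ∀ j, mgf ((A j).indicator 1) P t = 1 + p * (exp t - 1) := fun j => by
    rw [mgf_indicator (hAm j), measureReal_def, hp j, ENNReal.toReal_ofReal hp0]
  calc mgf (∑ j ∈ s, (A j).indicator 1) P t = ∏ j ∈ s, (1 + p * (exp t - 1)) := by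
        rw [hind.mgf_sum fun j => measurable_const.indicator (hAm j)]
        exact Finset.prod_congr rfl fun j _ => hmgf j
    _ ≤ ∏ j ∈ s, exp (p * (exp t - 1)) :=
        Finset.prod_le_prod (fun j _ => by rw [← hmgf j]; exact mgf_nonneg)
          fun j _ => by linarith [add_one_le_exp (p * (exp t - 1))]
    _ = exp (s.card * (p * (exp t - 1))) := by rw [Finset.prod_const, exp_nat_mul]

lemma measure_sum_indicator_ge_le (hp0 : 0 ≤ p) (s : Finset ι) (a : ℝ) {t : ℝ} (ht : 0 ≤ t) :
    P {ω | a ≤ (∑ j ∈ s, (A j).indicator 1) ω}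
      ≤ ENNReal.ofReal (exp (-t * a + s.card * (p * (exp t - 1)))) := by
  rw [← ofReal_measureReal, exp_add]
  refine ENNReal.ofReal_le_ofReal ((measure_ge_le_exp_mul_mgf a ht
    (integrable_exp_mul_sum_indicator hAm hA s t)).trans ?_)
  gcongr
  exact mgf_sum_indicator_le hAm hA hp hp0 s t

lemma measure_sum_indicator_le_le (hp0 : 0 ≤ p) (s : Finset ι) (b : ℝ) {t : ℝ} (ht : t ≤ 0) :
    P {ω | (∑ j ∈ s, (A j).indicator 1) ω ≤ b}
      ≤ ENNReal.ofReal (exp (-t * b + s.card * (p * (exp t - 1)))) := by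
  rw [← ofReal_measureReal, exp_add]
  refine ENNReal.ofReal_le_ofReal ((measure_le_le_exp_mul_mgf b ht
    (integrable_exp_mul_sum_indicator hAm hA s t)).trans ?_)
  gcongr
  exact mgf_sum_indicator_le hAm hA hp hp0 s t

lemma measure_sum_indicator_gt_le (hp0 : 0 ≤ p) (hp1 : p ≤ 1) {α m : ℝ} (hα : 0 < α)
    (hα1 : α ≤ 1) (hm : 0 ≤ m) {s : Finset ι} (hs : (s.card : ℝ) ≤ m * (1 + α) + 1) :
    P {ω | m * p * (1 + α) ^ 2 < (∑ j ∈ s, (A j).indicator 1) ω}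
      ≤ ENNReal.ofReal (exp (1 - m * p * chernoffRate (1 + α))) :=
  (measure_mono (Set.ofPred_subset_ofPred.mpr fun _ => le_of_lt)).trans <|
    (measure_sum_indicator_ge_le hAm hA hp hp0 s _ (log_nonneg (by linarith))).trans <|
    ENNReal.ofReal_le_ofReal <| exp_le_exp.mpr <| upper_exponent_le hα hα1 hm hp0 hp1 hs

lemma measure_sum_indicator_lt_le (hp0 : 0 ≤ p) (hp1 : p ≤ 1) {α m : ℝ} (hα : 0 < α)
    (hα1 : α ≤ 1 / 2) (hm : 0 ≤ m) {s : Finset ι} (hs : m * (1 - α) - 1 ≤ s.card) :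
    P {ω | (∑ j ∈ s, (A j).indicator 1) ω < m * p * (1 - α) ^ 2}
      ≤ ENNReal.ofReal (exp (1 - m * p * (chernoffRate (1 - α) / 2))) :=
  (measure_mono (Set.ofPred_subset_ofPred.mpr fun _ => le_of_lt)).trans <|
    (measure_sum_indicator_le_le hAm hA hp hp0 s _
      (log_nonpos (by linarith) (by linarith))).trans <|
    ENNReal.ofReal_le_ofReal <| exp_le_exp.mpr <| lower_exponent_le hα hα1 hm hp0 hp1 hs

end Chernoff

lemma measure_sum_indicator_deviation_le {Ω : Type*} [MeasurableSpace Ω] {P : Measure Ω}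
    [IsProbabilityMeasure P] {A : ℕ → Set Ω} (hAm : ∀ j, MeasurableSet (A j))
    (hA : iIndepSet A P) {p : ℝ} (hp : ∀ j, P (A j) = ENNReal.ofReal p) (hp0 : 0 ≤ p)
    {pmin : ℝ} (hpmin : 0 < p → pmin ≤ p) {α : ℝ} (hα : 0 < α) (hα2 : α ≤ 1 / 2) (M : ℕ) :
    P {ω | ¬ ((∑ j ∈ Finset.Icc 1 ⌈(M : ℝ) * (1 + α)⌉₊, (A j).indicator 1) ω
          ≤ M * p * (1 + α) ^ 2 ∧
        M * p * (1 - α) ^ 2 ≤ (∑ j ∈ Finset.Icc 1 ⌊(M : ℝ) * (1 - α)⌋₊, (A j).indicator 1) ω)}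
      ≤ ENNReal.ofReal
          (2 * exp (1 - pmin * min (chernoffRate (1 + α)) (chernoffRate (1 - α) / 2) * M)) := by
  rcases hp0.eq_or_lt with rfl | hp_pos
  · refine le_of_eq_of_le (measure_mono_null (fun ω hω => ?_)
      (measure_sum_indicator_pos_eq_zero (fun j => by rw [hp j, ENNReal.ofReal_zero])
        (Finset.Icc 1 ⌈(M : ℝ) * (1 + α)⌉₊))) zero_le
    simp only [Set.mem_ofPred_eq, mul_zero, zero_mul, not_and_or, not_le] at hω ⊢
    refine hω.resolve_right (not_lt.mpr ?_)
    rw [Finset.sum_apply]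
    exact Finset.sum_nonneg fun j _ => Set.indicator_nonneg (fun _ _ => zero_le_one) _
  have hp1 : p ≤ 1 := ENNReal.ofReal_le_one.mp (hp 0 ▸ prob_le_one)
  have hM : (0 : ℝ) ≤ M := M.cast_nonneg
  set c := pmin * min (chernoffRate (1 + α)) (chernoffRate (1 - α) / 2)
  have hexp : ∀ r, min (chernoffRate (1 + α)) (chernoffRate (1 - α) / 2) ≤ r →
      exp (1 - M * p * r) ≤ exp (1 - c * M) := fun r hr => by
    have hmin : 0 ≤ min (chernoffRate (1 + α)) (chernoffRate (1 - α) / 2) :=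
      le_min (chernoffRate_pos (by linarith) (by linarith)).le
        (half_pos (chernoffRate_pos (by linarith) (by linarith))).le
    have := mul_le_mul_of_nonneg_right (mul_le_mul (hpmin hp_pos) hr hmin hp0) hM
    exact exp_le_exp.mpr (by linarith)
  have hup := measure_sum_indicator_gt_le hAm hA hp hp0 hp1 hα (by linarith) hM
    (s := Finset.Icc 1 ⌈(M : ℝ) * (1 + α)⌉₊)
    (by simpa using (Nat.ceil_lt_add_one (by positivity : (0 : ℝ) ≤ M * (1 + α))).le)
  have hlow := measure_sum_indicator_lt_le hAm hA hp hp0 hp1 hα hα2 hM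
    (s := Finset.Icc 1 ⌊(M : ℝ) * (1 - α)⌋₊)
    (by simpa using (Nat.sub_one_lt_floor ((M : ℝ) * (1 - α))).le)
  refine (measure_mono fun ω hω => ?_).trans ((measure_union_le _ _).trans
    ((add_le_add (hup.trans (ENNReal.ofReal_le_ofReal (hexp _ (min_le_left _ _))))
      (hlow.trans (ENNReal.ofReal_le_ofReal (hexp _ (min_le_right _ _))))).trans ?_))
  · simpa only [Set.mem_union, Set.mem_ofPred_eq, not_and_or, not_le] using hω
  · rw [← ENNReal.ofReal_add (exp_nonneg _) (exp_nonneg _), two_mul]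

section Pattern

variable {L Ω : Type} [LinearOrder L]
  (U : {p : (L × L) × ℕ × ℕ // p.1.1 ≤ p.1.2} → Ω → ℝ) (g : L → L → ℝ) (w : L)
  (V E : Finset L) (k : L → ℕ)

def pairIndex (w z : L) (i j : ℕ) : {p : (L × L) × ℕ × ℕ // p.1.1 ≤ p.1.2} :=
  if h : w ≤ z then ⟨((w, z), (i, j)), h⟩ else ⟨((z, w), (j, i)), le_of_not_ge h⟩

lemma Uext_eq_pairIndex (z : L) (i j : ℕ) : Uext U w z i j = U (pairIndex w z i j) := by
  unfold Uext pairIndex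
  split_ifs <;> rfl

-- The index determines the unordered pair `{w, z}`, hence `z`, and then `j` is the coordinate
-- on the side of `w`; this also covers `z = w`.
lemma pairIndex_injective :
    Function.Injective fun x : ℕ × L => pairIndex w x.2 x.1 (k x.2) := by
  rintro ⟨j, z⟩ ⟨j', z'⟩ h
  simp only [pairIndex] at h
  split_ifs at h <;> simp only [Subtype.mk.injEq, Prod.mk.injEq] at h <;> grind

def patternEvent (j : ℕ) : Set Ω :=
  {ω | ∀ z ∈ V, (z ∈ E → Uext U w z j (k z) ω ≤ g w z) ∧ (z ∉ E → g w z < Uext U w z j (k z) ω)}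

def patternInterval (z : L) : Set ℝ :=
  if z ∈ E then Set.Iic (g w z) else Set.Ioi (g w z)

def patternProb : ℝ := (∏ z ∈ E, g w z) * ∏ z ∈ V \ E, (1 - g w z)

lemma patternEvent_eq_biInter (j : ℕ) :
    patternEvent U g w V E k j
      = ⋂ z ∈ V, U (pairIndex w z j (k z)) ⁻¹' patternInterval g w E z := by
  ext ω
  simp only [patternEvent, patternInterval, Set.mem_ofPred_eq, Set.mem_iInter, Set.mem_preimage,
    ← Uext_eq_pairIndex]
  refine forall₂_congr fun z _ => ?_
  by_cases hz : z ∈ E <;> simp [hz]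

lemma patternEvent_congr {k' : L → ℕ} (hk : ∀ z ∈ V, k z = k' z) (j : ℕ) :
    patternEvent U g w V E k j = patternEvent U g w V E k' j := by
  simp only [patternEvent_eq_biInter]
  exact Set.iInter₂_congr fun z hz => by rw [hk z hz]

lemma prod_ite_eq_patternProb (hEV : E ⊆ V) :
    ∏ z ∈ V, (if z ∈ E then g w z else 1 - g w z) = patternProb g w V E := by
  classical
  rw [Finset.prod_ite, Finset.filter_mem_eq_inter, Finset.inter_eq_right.mpr hEV,
    Finset.filter_notMem_eq_sdiff, patternProb]

lemma patternProb_nonneg (hg01 : ∀ z, g w z ∈ Set.Icc (0 : ℝ) 1) : 0 ≤ patternProb g w V E :=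
  mul_nonneg (Finset.prod_nonneg fun z _ => (hg01 z).1)
    (Finset.prod_nonneg fun z _ => sub_nonneg.mpr (hg01 z).2)

lemma measurableSet_patternInterval (z : L) : MeasurableSet (patternInterval g w E z) := by
  unfold patternInterval
  split_ifs
  exacts [measurableSet_Iic, measurableSet_Ioi]

variable [MeasurableSpace Ω] {P : Measure Ω}

lemma measurableSet_patternEvent (hU_meas : ∀ i, Measurable (U i)) (j : ℕ) :
    MeasurableSet (patternEvent U g w V E k j) := by
  rw [patternEvent_eq_biInter]
  exact Finset.measurableSet_biInter V fun z _ =>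
    hU_meas _ (measurableSet_patternInterval g w E z)

lemma measure_preimage_patternInterval (hU_meas : ∀ i, Measurable (U i))
    (hU_unif : ∀ i, Measure.map (U i) P = volume.restrict (Set.Icc (0 : ℝ) 1))
    {z : L} (hg : g w z ∈ Set.Icc (0 : ℝ) 1) (i : {p : (L × L) × ℕ × ℕ // p.1.1 ≤ p.1.2}) :
    P (U i ⁻¹' patternInterval g w E z)
      = ENNReal.ofReal (if z ∈ E then g w z else 1 - g w z) := by
  have hB := measurableSet_patternInterval g w E z
  rw [← Measure.map_apply (hU_meas i) hB, hU_unif i, Measure.restrict_apply hB]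
  by_cases hz : z ∈ E
  · have : Set.Iic (g w z) ∩ Set.Icc 0 1 = Set.Icc 0 (g w z) := by
      ext x; simp only [Set.mem_inter_iff, Set.mem_Iic, Set.mem_Icc] at *; grind
    simp [patternInterval, hz, this]
  · have : Set.Ioi (g w z) ∩ Set.Icc 0 1 = Set.Ioc (g w z) 1 := by
      ext x; simp only [Set.mem_inter_iff, Set.mem_Ioi, Set.mem_Icc, Set.mem_Ioc] at *; grind
    simp [patternInterval, hz, this]

variable (hU_meas : ∀ i, Measurable (U i)) (hU_indep : iIndepFun U P)
  (hU_unif : ∀ i, Measure.map (U i) P = volume.restrict (Set.Icc (0 : ℝ) 1))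
  (hg01 : ∀ z, g w z ∈ Set.Icc (0 : ℝ) 1) (hEV : E ⊆ V)
include hU_meas hU_indep hU_unif hg01 hEV

lemma measure_biInter_patternEvent (s : Finset ℕ) :
    P (⋂ j ∈ s, patternEvent U g w V E k j) = ENNReal.ofReal (patternProb g w V E) ^ s.card := by
  have hprod : ⋂ j ∈ s, patternEvent U g w V E k j
      = ⋂ x ∈ s ×ˢ V, U (pairIndex w x.2 x.1 (k x.2)) ⁻¹' patternInterval g w E x.2 := by
    ext ω
    simp only [patternEvent_eq_biInter, Set.mem_iInter, Finset.mem_product, and_imp,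
      Prod.forall]
    exact ⟨fun h j z hj hz => h j hj z hz, fun h j hj z hz => h j z hj hz⟩
  have hq0 : ∀ z, 0 ≤ (if z ∈ E then g w z else 1 - g w z) := fun z => by
    have := hg01 z; split_ifs <;> simp only [Set.mem_Icc] at this <;> linarith
  rw [hprod, (hU_indep.precomp (pairIndex_injective w k)).meas_biInter
      fun x _ => ⟨_, measurableSet_patternInterval g w E x.2, rfl⟩, Finset.prod_product]
  simp only [measure_preimage_patternInterval U g w E hU_meas hU_unif (hg01 _),
    ← ENNReal.ofReal_prod_of_nonneg fun z _ => hq0 z, prod_ite_eq_patternProb g w V E hEV,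
    Finset.prod_const]

lemma measure_patternEvent (j : ℕ) :
    P (patternEvent U g w V E k j) = ENNReal.ofReal (patternProb g w V E) := by
  simpa using measure_biInter_patternEvent U g w V E k hU_meas hU_indep hU_unif hg01 hEV {j}

lemma iIndepSet_patternEvent : iIndepSet (patternEvent U g w V E k) P := by
  rw [iIndepSet_iff_meas_biInter (measurableSet_patternEvent U g w V E k hU_meas)]
  intro s
  rw [measure_biInter_patternEvent U g w V E k hU_meas hU_indep hU_unif hg01 hEV,
    Finset.prod_congr rfl fun j _ =>
      measure_patternEvent U g w V E k hU_meas hU_indep hU_unif hg01 hEV j, Finset.prod_const]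

end Pattern

section Concentration

variable {L Ω : Type} [LinearOrder L]
  (U : {p : (L × L) × ℕ × ℕ // p.1.1 ≤ p.1.2} → Ω → ℝ) (g : L → L → ℝ) (α : ℝ) (M : ℕ)

def CountsConcentrate (w : L) (V E : Finset L) (k : L → ℕ) (ω : Ω) : Prop :=
  (Set.ncard {j | 1 ≤ j ∧ j ≤ ⌈(M : ℝ) * (1 + α)⌉₊ ∧ ω ∈ patternEvent U g w V E k j} : ℝ)
      ≤ M * patternProb g w V E * (1 + α) ^ 2 ∧
    M * patternProb g w V E * (1 - α) ^ 2
      ≤ Set.ncard {j | 1 ≤ j ∧ j ≤ ⌊(M : ℝ) * (1 - α)⌋₊ ∧ ω ∈ patternEvent U g w V E k j}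

-- The event `F^M`; `edge_ldp` states it with `patternEvent` and `patternProb` unfolded.
def concentrationEvent : Set Ω :=
  {ω | ∀ w : L, ∀ V : Finset L, w ∉ V → ∀ E ⊆ V, ∀ k : L → ℕ,
    (∀ z ∈ V, k z ∈ Finset.Icc 1 ⌈(M : ℝ) * (1 + α)⌉₊) → CountsConcentrate U g α M w V E k ω}

variable (L) in
def patternTuples [Fintype L] (N : ℕ) : Finset (L × Finset L × Finset L × (L → ℕ)) :=
  (Finset.univ ×ˢ Finset.univ ×ˢ Finset.univ ×ˢ Fintype.piFinset fun _ => Finset.Icc 1 N).filter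
    fun x => x.2.2.1 ⊆ x.2.1

variable (L) in
lemma card_patternTuples_le [Fintype L] (N : ℕ) :
    (patternTuples L N).card
      ≤ Fintype.card L * 2 ^ Fintype.card L * 2 ^ Fintype.card L * N ^ Fintype.card L :=
  (Finset.card_filter_le _ _).trans_eq <| by
    simp [Finset.card_product, Fintype.card_finset, Fintype.card_piFinset, mul_assoc]

lemma compl_concentrationEvent_subset [Fintype L] (hα : 0 < α) (hM : 1 ≤ M) :
    (concentrationEvent U g α M)ᶜ ⊆ ⋃ x ∈ patternTuples L ⌈(M : ℝ) * (1 + α)⌉₊,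
      {ω | ¬ CountsConcentrate U g α M x.1 x.2.1 x.2.2.1 x.2.2.2 ω} := by
  intro ω hω
  simp only [concentrationEvent, Set.mem_compl_iff, Set.mem_ofPred_eq, not_forall] at hω
  obtain ⟨w, V, -, E, hEV, k, hk, hbad⟩ := hω
  have hk' : ∀ z ∈ V, (if z ∈ V then k z else 1) = k z := fun z hz => if_pos hz
  refine Set.mem_biUnion (x := (w, V, E, fun z => if z ∈ V then k z else 1)) ?_ ?_
  · simp only [patternTuples, Finset.coe_filter, Set.mem_ofPred_eq, Finset.mem_product,
      Finset.mem_univ, Fintype.mem_piFinset, true_and, and_true, hEV]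
    intro z
    split_ifs with hz
    · exact hk z hz
    · exact Finset.mem_Icc.mpr ⟨le_rfl, Nat.one_le_iff_ne_zero.mpr <| by
        simpa using (by positivity : (0 : ℝ) < M * (1 + α))⟩
  · simpa only [Set.mem_ofPred_eq, CountsConcentrate, patternEvent_congr U g w V E _ hk']
      using hbad

variable [MeasurableSpace Ω] {P : Measure Ω} [IsProbabilityMeasure P]
  (hU_meas : ∀ i, Measurable (U i)) (hU_indep : iIndepFun U P)
  (hU_unif : ∀ i, Measure.map (U i) P = volume.restrict (Set.Icc (0 : ℝ) 1))
include hU_meas hU_indep hU_unif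

lemma measure_not_countsConcentrate_le {w : L} (hg01 : ∀ z, g w z ∈ Set.Icc (0 : ℝ) 1)
    {V E : Finset L} (hEV : E ⊆ V) (k : L → ℕ) {pmin : ℝ}
    (hpmin : 0 < patternProb g w V E → pmin ≤ patternProb g w V E)
    (hα : 0 < α) (hα2 : α ≤ 1 / 2) :
    P {ω | ¬ CountsConcentrate U g α M w V E k ω}
      ≤ ENNReal.ofReal
          (2 * exp (1 - pmin * min (chernoffRate (1 + α)) (chernoffRate (1 - α) / 2) * M)) := by
  simp only [CountsConcentrate, ncard_mem_Icc_eq_sum_indicator]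
  exact measure_sum_indicator_deviation_le
    (measurableSet_patternEvent U g w V E k hU_meas)
    (iIndepSet_patternEvent U g w V E k hU_meas hU_indep hU_unif hg01 hEV)
    (measure_patternEvent U g w V E k hU_meas hU_indep hU_unif hg01 hEV)
    (patternProb_nonneg g w V E hg01) hpmin hα hα2 M

lemma measure_compl_concentrationEvent_le [Fintype L]
    (hg01 : ∀ w z, g w z ∈ Set.Icc (0 : ℝ) 1) {pmin : ℝ}
    (hpmin : ∀ w V E, 0 < patternProb g w V E → pmin ≤ patternProb g w V E)
    (hα : 0 < α) (hα2 : α ≤ 1 / 2) (hM : 1 ≤ M) :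
    P (concentrationEvent U g α M)ᶜ
      ≤ ENNReal.ofReal (2 * exp 1 * Fintype.card L * 8 ^ Fintype.card L * M ^ Fintype.card L
          * exp (-(pmin * min (chernoffRate (1 + α)) (chernoffRate (1 - α) / 2)) * M)) := by
  set c := pmin * min (chernoffRate (1 + α)) (chernoffRate (1 - α) / 2)
  set n := Fintype.card L
  set T := patternTuples L ⌈(M : ℝ) * (1 + α)⌉₊
  have hT : (T.card : ℝ) ≤ n * 8 ^ n * M ^ n := calc
    (T.card : ℝ) ≤ n * 2 ^ n * 2 ^ n * ⌈(M : ℝ) * (1 + α)⌉₊ ^ n := by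
      exact_mod_cast card_patternTuples_le L _
    _ ≤ n * 2 ^ n * 2 ^ n * (2 * M) ^ n := by
      gcongr
      exact_mod_cast Nat.ceil_le.mpr (by push_cast; nlinarith)
    _ = n * 8 ^ n * M ^ n := by
      rw [show (8 : ℝ) = 2 * 2 * 2 by norm_num, mul_pow, mul_pow, mul_pow]
      ring
  calc P (concentrationEvent U g α M)ᶜ
      ≤ ∑ x ∈ T, P {ω | ¬ CountsConcentrate U g α M x.1 x.2.1 x.2.2.1 x.2.2.2 ω} :=
        (measure_mono (compl_concentrationEvent_subset U g α M hα hM)).trans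
          (measure_biUnion_finset_le _ _)
    _ ≤ ∑ x ∈ T, ENNReal.ofReal (2 * exp (1 - c * M)) := Finset.sum_le_sum fun x hx =>
        measure_not_countsConcentrate_le U g α M hU_meas hU_indep hU_unif (hg01 x.1)
          (Finset.mem_filter.mp hx).2 x.2.2.2 (hpmin x.1 x.2.1 x.2.2.1) hα hα2
    _ = ENNReal.ofReal (T.card * (2 * (exp 1 * exp (-c * M)))) := by
        rw [Finset.sum_const, nsmul_eq_mul, ENNReal.ofReal_mul (Nat.cast_nonneg _),
          ENNReal.ofReal_natCast, sub_eq_add_neg, exp_add, neg_mul]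
    _ ≤ _ := ENNReal.ofReal_le_ofReal <| by
        calc (T.card : ℝ) * (2 * (exp 1 * exp (-c * M)))
            ≤ n * 8 ^ n * M ^ n * (2 * (exp 1 * exp (-c * M))) := by gcongr
          _ = _ := by ring

end Concentration

theorem edge_ldp_general {L : Type} [Fintype L] [LinearOrder L]
    {Ω : Type} [MeasurableSpace Ω] (P : Measure Ω) [IsProbabilityMeasure P]
    (U : {p : (L × L) × ℕ × ℕ // p.1.1 ≤ p.1.2} → Ω → ℝ)
    (hU_meas : ∀ i, Measurable (U i))
    (hU_indep : iIndepFun U P)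
    (hU_unif : ∀ i, Measure.map (U i) P = volume.restrict (Set.Icc (0 : ℝ) 1))
    (g : L → L → ℝ) (hg01 : ∀ w z, g w z ∈ Set.Icc (0 : ℝ) 1)
    (α : ℝ) (hα : α ∈ Set.Ioo (0 : ℝ) (1/2)) :
    ∃ c : ℝ, 0 < c ∧ ∃ M₀ : ℕ, 1 ≤ M₀ ∧ ∀ M : ℕ, M₀ ≤ M →
      ENNReal.ofReal (1 - Real.exp (-c * M))
        ≤ P {ω | ∀ w : L, ∀ V : Finset L, w ∉ V → ∀ E ⊆ V, ∀ k : L → ℕ,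
            (∀ z ∈ V, k z ∈ Finset.Icc 1 ⌈(M : ℝ) * (1 + α)⌉₊) →
            ((Set.ncard {j : ℕ | 1 ≤ j ∧ j ≤ ⌈(M : ℝ) * (1 + α)⌉₊ ∧ ∀ z ∈ V,
                  (z ∈ E → Uext U w z j (k z) ω ≤ g w z) ∧
                  (z ∉ E → g w z < Uext U w z j (k z) ω)} : ℝ)
                ≤ (M : ℝ) * ((∏ z ∈ E, g w z) * ∏ z ∈ V \ E, (1 - g w z)) * (1 + α) ^ 2)
            ∧
            ((M : ℝ) * ((∏ z ∈ E, g w z) * ∏ z ∈ V \ E, (1 - g w z)) * (1 - α) ^ 2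
                ≤ (Set.ncard {j : ℕ | 1 ≤ j ∧ j ≤ ⌊(M : ℝ) * (1 - α)⌋₊ ∧ ∀ z ∈ V,
                  (z ∈ E → Uext U w z j (k z) ω ≤ g w z) ∧
                  (z ∉ E → g w z < Uext U w z j (k z) ω)} : ℝ))} := by
  obtain ⟨hα0, hα2⟩ := hα
  obtain ⟨pmin, hpmin, hpmin_le⟩ := Finite.exists_pos_forall_pos_imp_le
    fun x : L × Finset L × Finset L => patternProb g x.1 x.2.1 x.2.2
  set c := pmin * min (chernoffRate (1 + α)) (chernoffRate (1 - α) / 2)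
  have hc : 0 < c := mul_pos hpmin <| lt_min (chernoffRate_pos (by linarith) (by linarith))
    (half_pos (chernoffRate_pos (by linarith) (by linarith)))
  set n := Fintype.card L
  obtain ⟨M₀, hM₀⟩ := eventually_atTop.mp
    (eventually_mul_pow_mul_exp_neg_le_one (2 * exp 1 * n * 8 ^ n) (c / 2) (half_pos hc) n)
  refine ⟨c / 2, half_pos hc, max M₀ 1, le_max_right _ _, fun M hM => ?_⟩
  refine ofReal_one_sub_le_measure_of_measure_compl_le (exp_nonneg _)
    ((measure_compl_concentrationEvent_le U g α M hU_meas hU_indep hU_unif hg01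
      (fun w V E => hpmin_le (w, V, E)) hα0 hα2.le (le_of_max_le_right hM)).trans
    (ENNReal.ofReal_le_ofReal ?_))
  calc 2 * exp 1 * n * 8 ^ n * M ^ n * exp (-c * M)
      = 2 * exp 1 * n * 8 ^ n * M ^ n * exp (-(c / 2) * M) * exp (-(c / 2) * M) := by
        rw [mul_assoc _ (exp _) (exp _), ← exp_add]
        congr 2
        ring
    _ ≤ 1 * exp (-(c / 2) * M) := by gcongr; exact hM₀ M (le_of_max_le_left hM)
    _ = exp (-(c / 2) * M) := one_mul _

/-- Large deviations estimate for the numbers of "edge patterns" in the random connection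
model discretisation: with probability at least `1 - e^{-cM}`, simultaneously for every
`w ∈ L`, every `V ⊆ L∖{w}`, every `E ⊆ V` and every vector `𝐤` of indices in
`{1,…,⌈M(1+α)⌉}`, the number of `j ∈ {1,…,⌈M(1+α)⌉}` realising the pattern `E` is at
most `M g^E_{V,w} (1+α)²`, and the number of `j ∈ {1,…,⌊M(1-α)⌋}` realising it is at
least `M g^E_{V,w} (1-α)²`. -/
theorem edge_ldp {L : Type} [Fintype L] [LinearOrder L]
    {Ω : Type} [MeasurableSpace Ω] (P : Measure Ω) [IsProbabilityMeasure P]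
    (U : {p : (L × L) × ℕ × ℕ // p.1.1 ≤ p.1.2} → Ω → ℝ)
    (hU_meas : ∀ i, Measurable (U i))
    (hU_indep : iIndepFun U P)
    (hU_unif : ∀ i, Measure.map (U i) P = volume.restrict (Set.Icc (0 : ℝ) 1))
    (g : L → L → ℝ) (hg01 : ∀ w z, g w z ∈ Set.Icc (0 : ℝ) 1)
    (hg_symm : ∀ w z, g w z = g z w)
    (α : ℝ) (hα : α ∈ Set.Ioo (0 : ℝ) (1/2)) :
    ∃ c : ℝ, 0 < c ∧ ∃ M₀ : ℕ, 1 ≤ M₀ ∧ ∀ M : ℕ, M₀ ≤ M →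
      ENNReal.ofReal (1 - Real.exp (-c * M))
        ≤ P {ω | ∀ w : L, ∀ V : Finset L, w ∉ V → ∀ E ⊆ V, ∀ k : L → ℕ,
            (∀ z ∈ V, k z ∈ Finset.Icc 1 ⌈(M : ℝ) * (1 + α)⌉₊) →
            ((Set.ncard {j : ℕ | 1 ≤ j ∧ j ≤ ⌈(M : ℝ) * (1 + α)⌉₊ ∧ ∀ z ∈ V,
                  (z ∈ E → Uext U w z j (k z) ω ≤ g w z) ∧
                  (z ∉ E → g w z < Uext U w z j (k z) ω)} : ℝ)
                ≤ (M : ℝ) * ((∏ z ∈ E, g w z) * ∏ z ∈ V \ E, (1 - g w z)) * (1 + α) ^ 2)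
            ∧
            ((M : ℝ) * ((∏ z ∈ E, g w z) * ∏ z ∈ V \ E, (1 - g w z)) * (1 - α) ^ 2
                ≤ (Set.ncard {j : ℕ | 1 ≤ j ∧ j ≤ ⌊(M : ℝ) * (1 - α)⌋₊ ∧ ∀ z ∈ V,
                  (z ∈ E → Uext U w z j (k z) ω ≤ g w z) ∧
                  (z ∉ E → g w z < Uext U w z j (k z) ω)} : ℝ))} :=
  edge_ldp_general P U hU_meas hU_indep hU_unif g hg01 α hα
end

section
/- Let d ≥ 1 and let g : ℝ^d → [0,1] be a measurable connection function, i.e. g(x) depends only on ‖x‖ and g(x) ≥ g(y) whenever ‖x‖ ≤ ‖y‖, and assume 0 < ∫_{ℝ^d} g(x) dx < ∞. For k ≥ 2 and points x₁, …, x_k ∈ ℝ^d, define g₂(x₁, …, x_k) := Σ_{H} Π_{{i,j} ∈ E(H)} g(x_i − x_j) · Π_{{i,j} ∈ Pairs(k)∖E(H)} (1 − g(x_i − x_j)), where the sum is over all connected simple graphs H on the vertex set {1, …, k} and Pairs(k) is the set of all unordered pairs of distinct elements of {1,…,k}; equivalently, g₂(x₁,…,x_k) is the probability that the random graph on {x₁,…,x_k},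 in which each pair {x_i, x_j} is joined by an edge independently with probability g(x_i − x_j), is connected. Then for every k ≥ 2, ∫_{(ℝ^d)^{k−1}} g₂(𝟎, x₁, …, x_{k−1}) dx₁ ⋯ dx_{k−1} < ∞. -/
/-!
A connected graph on `{0, …, m}` has a spanning tree in which every vertex `v ≠ 0` is joined to a
neighbour strictly closer to `0` in graph distance. Every factor of a summand of `g₂` lies in
`[0, 1]`, so the summand is at most the product of `g` over the tree edges. Integrating that
product over the non-root points, deepest vertex first, each vertex contributes a factor `∫ g`
by translation invariance, so the integral equals `(∫ g) ^ m < ∞`; there are finitely many graphs.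
-/

open MeasureTheory

open scoped Classical in
/-- The probability `g₂(x₁, …, x_k)` that the random graph on the points `x₁, …, x_k`,
in which each pair `{x_i, x_j}` is independently joined by an edge with probability
`g (x_i - x_j)`, is connected: the sum over all connected simple graphs `H` on
`{1, …, k}` of the product of `g (x_i - x_j)` over edges of `H` and of
`1 - g (x_i - x_j)` over non-edges of `H`. -/
noncomputable def gtwo {d k : ℕ} (g : EuclideanSpace ℝ (Fin d) → ℝ)
    (x : Fin k → EuclideanSpace ℝ (Fin d)) : ℝ :=
  ∑ H : SimpleGraph (Fin k),
    if H.Connected then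
      ∏ i : Fin k, ∏ j : Fin k,
        if i < j then (if H.Adj i j then g (x i - x j) else 1 - g (x i - x j)) else 1
    else 0

open scoped ENNReal

theorem SimpleGraph.Connected.exists_adj_dist_lt {V : Type*} {G : SimpleGraph V}
    (hG : G.Connected) {v r : V} (hv : v ≠ r) : ∃ u, G.Adj u v ∧ G.dist u r < G.dist v r := by
  obtain ⟨w, hw⟩ := hG.exists_walk_length_eq_dist v r
  cases w with
  | nil => exact absurd rfl hv
  | cons h q =>
    refine ⟨_, h.symm, (SimpleGraph.dist_le q).trans_lt ?_⟩
    rw [← hw, SimpleGraph.Walk.length_cons]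
    exact Nat.lt_succ_self _

theorem measurable_finCons_apply {E : Type*} [MeasurableSpace E] {m : ℕ} (a : E)
    (i : Fin (m + 1)) : Measurable fun x : Fin m → E => (Fin.cons a x : Fin (m + 1) → E) i := by
  cases i using Fin.cases with
  | zero => exact measurable_const
  | succ i => exact measurable_pi_apply i

theorem lmarginal_mul_const {δ : Type*} {X : δ → Type*} [∀ i, MeasurableSpace (X i)]
    (μ : ∀ i, Measure (X i)) [DecidableEq δ] (s : Finset δ) {f : (∀ i, X i) → ℝ≥0∞}
    (hf : Measurable f) (c : ℝ≥0∞) :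
    (∫⋯∫⁻_s, (fun x => f x * c) ∂μ) = fun x => (∫⋯∫⁻_s, f ∂μ) x * c := by
  ext x
  exact lintegral_mul_const _ (hf.comp measurable_updateFinset)

theorem measurable_prod_sub_parent {E : Type*} [Sub E] [MeasurableSpace E] [MeasurableSub₂ E]
    {G : E → ℝ≥0∞} {m : ℕ} (a : E) (p : Fin m → Fin (m + 1)) (hG : Measurable G)
    (s : Finset (Fin m)) :
    Measurable fun x : Fin m → E =>
      ∏ j ∈ s, G ((Fin.cons a x : Fin (m + 1) → E) (p j) - x j) :=
  Finset.measurable_prod _ fun j _ =>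
    hG.comp ((measurable_finCons_apply a (p j)).sub (measurable_pi_apply j))

section TreeIntegral

variable {E : Type*} [AddGroup E] [MeasurableSpace E] [MeasurableAdd₂ E] [MeasurableNeg E]
  (μ : Measure E) [SigmaFinite μ] [μ.IsAddLeftInvariant] [μ.IsNegInvariant]
  {G : E → ℝ≥0∞} {m : ℕ} (a : E) (p : Fin m → Fin (m + 1))

theorem lmarginal_prod_sub_parent (hG : Measurable G) {r : Fin (m + 1) → ℕ}
    (hr : ∀ j, r (p j) < r j.succ) (s : Finset (Fin m)) :
    (∫⋯∫⁻_s, (fun x => ∏ j ∈ s, G ((Fin.cons a x : Fin (m + 1) → E) (p j) - x j))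
      ∂fun _ => μ) = fun _ => (∫⁻ z, G z ∂μ) ^ s.card := by
  induction s using Finset.strongInduction with
  | H s ih =>
  rcases s.eq_empty_or_nonempty with rfl | hs
  · simp
  obtain ⟨v, hv, hmax⟩ := s.exists_max_image (fun j => r j.succ) hs
  -- `v` is a deepest vertex of `s`, so `x v` occurs in no factor of `s` other than its own.
  have hsplit : ∀ (x : Fin m → E) t,
      ∏ j ∈ s, G ((Fin.cons a (Function.update x v t) : Fin (m + 1) → E) (p j) -
          Function.update x v t j) =
        (∏ j ∈ s.erase v, G ((Fin.cons a x : Fin (m + 1) → E) (p j) - x j)) *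
          G ((Fin.cons a x : Fin (m + 1) → E) (p v) - t) := by
    intro x t
    rw [← Finset.mul_prod_erase s _ hv, mul_comm]
    congr 1
    · refine Finset.prod_congr rfl fun j hj => ?_
      have hpj : p j ≠ v.succ := by
        intro h
        have := hr j
        rw [h] at this
        exact this.not_ge (hmax j (Finset.mem_of_mem_erase hj))
      rw [Fin.cons_update, Function.update_of_ne hpj,
        Function.update_of_ne (Finset.ne_of_mem_erase hj)]
    · rw [Fin.cons_update, Function.update_of_ne fun h => (hr v).ne (congrArg r h),
        Function.update_self]
  rw [lmarginal_erase' _ (measurable_prod_sub_parent a p hG s) hv]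
  have hinner : ∀ x : Fin m → E, ∫⁻ t, ∏ j ∈ s, G ((Fin.cons a (Function.update x v t) :
      Fin (m + 1) → E) (p j) - Function.update x v t j) ∂μ =
      (∏ j ∈ s.erase v, G ((Fin.cons a x : Fin (m + 1) → E) (p j) - x j)) * ∫⁻ z, G z ∂μ := by
    intro x
    simp only [hsplit]
    rw [lintegral_const_mul _ (by fun_prop), lintegral_sub_left_eq_self]
  simp only [hinner]
  rw [lmarginal_mul_const _ _ (measurable_prod_sub_parent a p hG _), ih _ (Finset.erase_ssubset hv)]
  ext
  rw [← Finset.card_erase_add_one hv, pow_succ]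

theorem lintegral_prod_sub_parent (hG : Measurable G) {r : Fin (m + 1) → ℕ}
    (hr : ∀ j, r (p j) < r j.succ) :
    ∫⁻ x, ∏ j, G ((Fin.cons a x : Fin (m + 1) → E) (p j) - x j) ∂(Measure.pi fun _ => μ) =
      (∫⁻ z, G z ∂μ) ^ m := by
  rw [lintegral_eq_lmarginal_univ 0, lmarginal_prod_sub_parent μ a p hG hr, Finset.card_univ,
    Fintype.card_fin]

end TreeIntegral

open scoped Classical in
theorem ofReal_prod_edgeFactor_le_prod_parent {E : Type*} [AddGroup E] {g : E → ℝ}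
    (hg01 : ∀ x, g x ∈ Set.Icc (0 : ℝ) 1) (hg_neg : ∀ x, g (-x) = g x) {m : ℕ}
    (H : SimpleGraph (Fin (m + 1))) (p : Fin m → Fin (m + 1)) {r : Fin (m + 1) → ℕ}
    (hadj : ∀ j, H.Adj (p j) j.succ) (hr : ∀ j, r (p j) < r j.succ) (X : Fin (m + 1) → E) :
    ENNReal.ofReal (∏ i, ∏ j,
        if i < j then (if H.Adj i j then g (X i - X j) else 1 - g (X i - X j)) else 1) ≤
      ∏ j, ENNReal.ofReal (g (X (p j) - X j.succ)) := by
  set w : Fin (m + 1) → Fin (m + 1) → ℝ := fun i j =>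
    if i < j then (if H.Adj i j then g (X i - X j) else 1 - g (X i - X j)) else 1
  have hw : ∀ i j, 0 ≤ w i j ∧ w i j ≤ 1 := by
    intro i j
    have := hg01 (X i - X j)
    simp only [w]
    split_ifs <;> constructor <;> linarith [this.1, this.2]
  have hedge : ∀ {i j}, H.Adj i j → w (i ⊓ j) (i ⊔ j) = g (X i - X j) := by
    intro i j h
    rcases lt_or_gt_of_ne h.ne with hij | hij
    · simp [w, hij, hij.le, h]
    · simp [w, hij, hij.le, h.symm, ← hg_neg (X i - X j)]
  let q : Fin m → Fin (m + 1) × Fin (m + 1) := fun j => (Sym2.sortEquiv s(p j, j.succ)).1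
  have hq : Function.Injective q := by
    intro a b hab
    have hab : s(p a, a.succ) = s(p b, b.succ) :=
      Sym2.sortEquiv.injective (Subtype.ext hab)
    rcases Sym2.eq_iff.1 hab with ⟨-, h⟩ | ⟨h₁, h₂⟩
    · exact Fin.succ_injective _ h
    · refine (lt_irrefl (r (p a)) ?_).elim
      calc r (p a) < r a.succ := hr a
        _ = r (p b) := by rw [h₂]
        _ < r b.succ := hr b
        _ = r (p a) := by rw [h₁]
  calc ENNReal.ofReal (∏ i, ∏ j, w i j)
      = ∏ ij : Fin (m + 1) × Fin (m + 1), ENNReal.ofReal (w ij.1 ij.2) := by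
        rw [ENNReal.ofReal_prod_of_nonneg fun i _ => Finset.prod_nonneg fun j _ => (hw i j).1,
          Fintype.prod_prod_type]
        exact Finset.prod_congr rfl fun i _ => ENNReal.ofReal_prod_of_nonneg fun j _ => (hw i j).1
    _ ≤ ∏ ij ∈ Finset.univ.image q, ENNReal.ofReal (w ij.1 ij.2) :=
        Finset.prod_le_prod_of_subset_of_le_one' (Finset.subset_univ _)
          fun ij _ _ => ENNReal.ofReal_le_one.2 (hw ij.1 ij.2).2
    _ = ∏ j, ENNReal.ofReal (g (X (p j) - X j.succ)) := by
        rw [Finset.prod_image hq.injOn]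
        exact Finset.prod_congr rfl fun j _ => by simp [q, hedge (hadj j)]

open scoped Classical in
theorem ofReal_gtwo_le_sum_prod_parent {d m : ℕ} {g : EuclideanSpace ℝ (Fin d) → ℝ}
    (hg01 : ∀ x, g x ∈ Set.Icc (0 : ℝ) 1) (hg_neg : ∀ x, g (-x) = g x)
    (p : SimpleGraph (Fin (m + 1)) → Fin m → Fin (m + 1))
    (hadj : ∀ H : SimpleGraph (Fin (m + 1)), H.Connected → ∀ j, H.Adj (p H j) j.succ)
    (hdist : ∀ H : SimpleGraph (Fin (m + 1)), H.Connected → ∀ j, H.dist (p H j) 0 < H.dist j.succ 0)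
    (X : Fin (m + 1) → EuclideanSpace ℝ (Fin d)) :
    ENNReal.ofReal (gtwo g X) ≤
      ∑ H with H.Connected, ∏ j, ENNReal.ofReal (g (X (p H j) - X j.succ)) := by
  rw [Finset.sum_filter]
  refine (Finset.le_sum_of_subadditive _ ENNReal.ofReal_zero.le
    (fun _ _ => ENNReal.ofReal_add_le) _ _).trans
    (Finset.sum_le_sum fun H _ => ?_)
  split_ifs with hH
  · exact ofReal_prod_edgeFactor_le_prod_parent hg01 hg_neg H (p H) (hadj H hH)
      (r := (H.dist · 0)) (hdist H hH) X
  · simp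

theorem gtwo_integrable_general (d : ℕ) (g : EuclideanSpace ℝ (Fin d) → ℝ)
    (hg_meas : Measurable g) (hg01 : ∀ x, g x ∈ Set.Icc (0 : ℝ) 1)
    (hg_radial_mono : ∀ x y : EuclideanSpace ℝ (Fin d), ‖x‖ ≤ ‖y‖ → g y ≤ g x)
    (hg_int_fin : ∫⁻ x, ENNReal.ofReal (g x) < ⊤)
    (m : ℕ) :
    ∫⁻ x : Fin m → EuclideanSpace ℝ (Fin d),
        ENNReal.ofReal (gtwo g (Fin.cons 0 x)) < ⊤ := by
  classical
  have hg_neg : ∀ x, g (-x) = g x := fun x =>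
    le_antisymm (hg_radial_mono _ _ (norm_neg x).ge) (hg_radial_mono _ _ (norm_neg x).le)
  choose! p hadj hdist using fun (H : SimpleGraph (Fin (m + 1))) (hH : H.Connected) (j : Fin m) =>
    hH.exists_adj_dist_lt (Fin.succ_ne_zero j)
  calc ∫⁻ x, ENNReal.ofReal (gtwo g (Fin.cons 0 x))
      ≤ ∫⁻ x, ∑ H with H.Connected, ∏ j, ENNReal.ofReal
          (g ((Fin.cons 0 x : Fin (m + 1) → EuclideanSpace ℝ (Fin d)) (p H j) - x j)) :=
        lintegral_mono fun x => ofReal_gtwo_le_sum_prod_parent hg01 hg_neg p hadj hdist _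
    _ = ∑ H : SimpleGraph (Fin (m + 1)) with H.Connected, (∫⁻ z, ENNReal.ofReal (g z)) ^ m := by
        rw [lintegral_finsetSum _ fun H _ =>
          measurable_prod_sub_parent 0 (p H) hg_meas.ennreal_ofReal _]
        refine Finset.sum_congr rfl fun H hH => ?_
        exact lintegral_prod_sub_parent volume 0 (p H) hg_meas.ennreal_ofReal (r := (H.dist · 0))
          (hdist H (Finset.mem_filter.1 hH).2)
    _ < ⊤ := ENNReal.sum_lt_top.2 fun _ _ => ENNReal.pow_lt_top hg_int_fin

/-- For a connection function `g` (radially symmetric, nonincreasing in the norm,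
with `0 < ∫ g < ∞`), the probability `g₂(𝟎, x₁, …, x_{k-1})` that `k` given points form
a connected random graph is integrable over `(ℝ^d)^{k-1}`. Here `k = m + 1 ≥ 2`. -/
theorem gtwo_integrable (d : ℕ) (hd : 1 ≤ d) (g : EuclideanSpace ℝ (Fin d) → ℝ)
    (hg_meas : Measurable g) (hg01 : ∀ x, g x ∈ Set.Icc (0 : ℝ) 1)
    (hg_radial_mono : ∀ x y : EuclideanSpace ℝ (Fin d), ‖x‖ ≤ ‖y‖ → g y ≤ g x)
    (hg_int_pos : 0 < ∫⁻ x, ENNReal.ofReal (g x))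
    (hg_int_fin : ∫⁻ x, ENNReal.ofReal (g x) < ⊤)
    (m : ℕ) (hm : 1 ≤ m) :
    ∫⁻ x : Fin m → EuclideanSpace ℝ (Fin d),
        ENNReal.ofReal (gtwo g (Fin.cons 0 x)) < ⊤ :=
  gtwo_integrable_general d g hg_meas hg01 hg_radial_mono hg_int_fin m
end
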